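/- arXiv:math/0111188 — 3 statements merged into one kernel-verified Lean document; each statement's English description precedes it below -/
import Mathlib

section
/- Let H be an E-standard class in Pic_r and let D be a semi-standard class. If σ ∈ W_r is such that σ(D) is E-semi-standard, then for every τ ∈ W_r one has H·τ(D) ≥ H·σ(D). In other words, the minimum value of H·τ(D) over τ in the Weyl group W_r is attained exactly when τ(D) is E-semi-standard. -/
open Finset

/-- The intersection form on `Pic_r = ℤ^{r+1}`: the symmetric bilinear form with
`E_0·E_0 = 1`, `E_i·E_i = -1` for `1 ≤ i ≤ r`, and `E_i·E_j = 0` for `i ≠ j`. -/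
def inter {r : ℕ} (x y : Fin (r + 1) → ℤ) : ℤ :=
  2 * (x 0 * y 0) - ∑ i, x i * y i

/-- The standard basis class `E_i` of `Pic_r`. -/
def Eb (r : ℕ) (i : Fin (r + 1)) : Fin (r + 1) → ℤ :=
  fun j => if j = i then 1 else 0

/-- The canonical class `K = -3E_0 + E_1 + ⋯ + E_r`. -/
def Kc (r : ℕ) : Fin (r + 1) → ℤ :=
  fun j => if j = 0 then -3 else 1

/-- The roots `r_0 = E_0 - E_1 - E_2 - E_3` and `r_i = E_i - E_{i+1}` for `1 ≤ i ≤ r-1`. -/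
def root (r : ℕ) (i : Fin r) : Fin (r + 1) → ℤ :=
  if (i : ℕ) = 0 then Eb r 0 - Eb r 1 - Eb r 2 - Eb r 3
  else Eb r i.castSucc - Eb r i.succ

/-- The reflection `σ_v(x) = x + (x·v) v` in the root `v`. -/
def reflect {r : ℕ} (v x : Fin (r + 1) → ℤ) : Fin (r + 1) → ℤ :=
  x + inter x v • v

/-- Membership in the Weyl group `W_r`: the group of transformations of `Pic_r`
generated by the reflections `σ_i(x) = x + (x·r_i) r_i`, `0 ≤ i ≤ r-1` (since each
generator is an involution, the submonoid generated coincides with the subgroup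
generated). -/
def InWeyl (r : ℕ) (f : (Fin (r + 1) → ℤ) → (Fin (r + 1) → ℤ)) : Prop :=
  f ∈ Submonoid.closure
    { g : Function.End (Fin (r + 1) → ℤ) | ∃ i : Fin r, g = reflect (root r i) }

/-- `H = dE_0 - m_1E_1 - ⋯ - m_rE_r` (so `d = H 0`, `m_i = -H i`) is E-standard:
`d ≥ m_1 ≥ ⋯ ≥ m_r ≥ 0`, `d ≥ m_1 + m_2` and `d ≥ m_1 + m_2 + m_3`. -/
def EStandard (r : ℕ) (H : Fin (r + 1) → ℤ) : Prop :=
  -H 1 ≤ H 0 ∧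
  (∀ i j : Fin (r + 1), 1 ≤ (i : ℕ) → i ≤ j → -H j ≤ -H i) ∧
  0 ≤ -H (Fin.last r) ∧
  -H 1 + -H 2 ≤ H 0 ∧
  -H 1 + -H 2 + -H 3 ≤ H 0

/-- `H = dE_0 - m_1E_1 - ⋯ - m_rE_r` is E-semi-standard: `d ≥ 0`,
`d ≥ m_1 ≥ ⋯ ≥ m_r` and `d ≥ m_1 + m_2 + m_3` (the `m_i` may be negative). -/
def ESemiStandard (r : ℕ) (H : Fin (r + 1) → ℤ) : Prop :=
  0 ≤ H 0 ∧
  -H 1 ≤ H 0 ∧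
  (∀ i j : Fin (r + 1), 1 ≤ (i : ℕ) → i ≤ j → -H j ≤ -H i) ∧
  -H 1 + -H 2 + -H 3 ≤ H 0

/-- A class is standard if its image under some element of `W_r` is E-standard. -/
def Standard (r : ℕ) (H : Fin (r + 1) → ℤ) : Prop :=
  ∃ f, InWeyl r f ∧ EStandard r (f H)

/-- A class is semi-standard if its image under some element of `W_r` is
E-semi-standard. -/
def SemiStandard (r : ℕ) (H : Fin (r + 1) → ℤ) : Prop :=
  ∃ f, InWeyl r f ∧ ESemiStandard r (f H)

/-- An exceptional class: an element of the `W_r`-orbit of `E_r`. -/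
def Exceptional (r : ℕ) (x : Fin (r + 1) → ℤ) : Prop :=
  ∃ f, InWeyl r f ∧ x = f (Eb r (Fin.last r))

/-- A line class: an element of the `W_r`-orbit of `E_0`. -/
def LineClass (r : ℕ) (x : Fin (r + 1) → ℤ) : Prop :=
  ∃ f, InWeyl r f ∧ x = f (Eb r 0)

/-- A pencil class: an element of the `W_r`-orbit of `E_0 - E_1`. -/
def PencilClass (r : ℕ) (x : Fin (r + 1) → ℤ) : Prop :=
  ∃ f, InWeyl r f ∧ x = f (Eb r 0 - Eb r 1)

/-- The elliptic generating class `C_i = 3E_0 - E_1 - ⋯ - E_i`. -/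
def Cc (r : ℕ) (i : Fin (r + 1)) : Fin (r + 1) → ℤ :=
  fun j => if j = 0 then 3 else if j ≤ i then -1 else 0

/-- The Euler characteristic `χ(H) = 1 + (H·H - H·K)/2`. -/
def chi (r : ℕ) (H : Fin (r + 1) → ℤ) : ℤ :=
  1 + (inter H H - inter H (Kc r)) / 2


/-! ### Auxiliary development: concrete Coxeter-theoretic machinery -/

namespace WeylMinAux

variable {r : ℕ}

/-! #### Fin numeral values -/

lemma fv1 (hr : 3 ≤ r) : ((1 : Fin (r+1)) : ℕ) = 1 := by
  rw [Fin.val_one', Nat.mod_eq_of_lt (by omega)]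

lemma fv2 (hr : 3 ≤ r) : ((2 : Fin (r+1)) : ℕ) = 2 := by
  show (Fin.ofNat (r+1) 2).val = 2
  rw [Fin.val_ofNat, Nat.mod_eq_of_lt (by omega)]

lemma fv3 (hr : 3 ≤ r) : ((3 : Fin (r+1)) : ℕ) = 3 := by
  show (Fin.ofNat (r+1) 3).val = 3
  rw [Fin.val_ofNat, Nat.mod_eq_of_lt (by omega)]

/-! #### Bilinearity of `inter` -/

lemma inter_comm' (x y : Fin (r+1) → ℤ) : inter x y = inter y x := by
  unfold inter
  rw [Finset.sum_congr rfl fun i _ => mul_comm (x i) (y i)]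
  ring

lemma inter_add_left (x y z : Fin (r+1) → ℤ) : inter (x + y) z = inter x z + inter y z := by
  unfold inter
  simp only [Pi.add_apply, add_mul]
  rw [Finset.sum_add_distrib]
  ring

lemma inter_add_right (x y z : Fin (r+1) → ℤ) : inter x (y + z) = inter x y + inter x z := by
  rw [inter_comm', inter_add_left, inter_comm' y x, inter_comm' z x]

lemma inter_smul_left (c : ℤ) (x y : Fin (r+1) → ℤ) : inter (c • x) y = c * inter x y := by
  unfold inter
  simp only [Pi.smul_apply, smul_eq_mul]
  have h : ∑ i, c * x i * y i = c * ∑ i, x i * y i := by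
    rw [Finset.mul_sum]
    exact Finset.sum_congr rfl fun i _ => by ring
  rw [h]
  ring

lemma inter_smul_right (c : ℤ) (x y : Fin (r+1) → ℤ) : inter x (c • y) = c * inter x y := by
  rw [inter_comm', inter_smul_left, inter_comm' y x]

lemma inter_sub_left (x y z : Fin (r+1) → ℤ) : inter (x - y) z = inter x z - inter y z := by
  unfold inter
  simp only [Pi.sub_apply, sub_mul]
  rw [Finset.sum_sub_distrib]
  ring

lemma inter_sub_right (x y z : Fin (r+1) → ℤ) : inter x (y - z) = inter x y - inter x z := by
  rw [inter_comm', inter_sub_left, inter_comm' y x, inter_comm' z x]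

lemma inter_zero_right (x : Fin (r+1) → ℤ) : inter x 0 = 0 := by
  unfold inter; simp

/-! #### Values of `inter` on basis vectors and roots -/

lemma inter_Eb_right (x : Fin (r+1) → ℤ) (a : Fin (r+1)) :
    inter x (Eb r a) = (if a = 0 then 2 * x 0 else 0) - x a := by
  unfold inter Eb
  have h1 : ∀ i : Fin (r+1), x i * (if i = a then (1:ℤ) else 0) = if i = a then x i else 0 := by
    intro i; split_ifs <;> ring
  rw [Finset.sum_congr rfl fun i _ => h1 i, Finset.sum_ite_eq' Finset.univ a x]
  simp only [Finset.mem_univ, if_true]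
  by_cases ha : a = 0
  · subst ha; simp
  · simp [ha, Ne.symm ha]

lemma root_eq_zero_case {i : Fin r} (h : (i:ℕ) = 0) :
    root r i = Eb r 0 - Eb r 1 - Eb r 2 - Eb r 3 := by
  simp [root, h]

lemma root_eq_pos_case {i : Fin r} (h : (i:ℕ) ≠ 0) :
    root r i = Eb r i.castSucc - Eb r i.succ := by
  simp [root, h]

lemma inter_root_right_zero (hr : 3 ≤ r) (x : Fin (r+1) → ℤ) {i : Fin r} (h : (i:ℕ) = 0) :
    inter x (root r i) = x 0 + x 1 + x 2 + x 3 := by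
  rw [root_eq_zero_case h, inter_sub_right, inter_sub_right, inter_sub_right,
    inter_Eb_right, inter_Eb_right, inter_Eb_right, inter_Eb_right]
  have h1 : (1 : Fin (r+1)) ≠ 0 := by
    intro hh; have h' := congrArg Fin.val hh; rw [fv1 hr] at h'; simp at h'
  have h2 : (2 : Fin (r+1)) ≠ 0 := by
    intro hh; have h' := congrArg Fin.val hh; rw [fv2 hr] at h'; simp at h'
  have h3 : (3 : Fin (r+1)) ≠ 0 := by
    intro hh; have h' := congrArg Fin.val hh; rw [fv3 hr] at h'; simp at h'
  simp only [if_pos rfl, if_neg h1, if_neg h2, if_neg h3, if_true]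
  ring

lemma inter_root_right_pos (x : Fin (r+1) → ℤ) {i : Fin r} (h : (i:ℕ) ≠ 0) :
    inter x (root r i) = x i.succ - x i.castSucc := by
  rw [root_eq_pos_case h, inter_sub_right, inter_Eb_right, inter_Eb_right]
  have hc : i.castSucc ≠ 0 := by
    intro hh; have h' := congrArg Fin.val hh; simp at h'; exact h h'
  have hs : i.succ ≠ 0 := Fin.succ_ne_zero i
  simp only [if_neg hc, if_neg hs]
  ring

lemma root_inter_self (hr : 3 ≤ r) (i : Fin r) : inter (root r i) (root r i) = -2 := by
  by_cases h : (i:ℕ) = 0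
  · rw [inter_root_right_zero hr _ h, root_eq_zero_case h]
    simp only [Pi.sub_apply, Eb, Fin.ext_iff, Fin.val_zero, fv1 hr, fv2 hr, fv3 hr]
    norm_num
  · rw [inter_root_right_pos _ h, root_eq_pos_case h]
    simp only [Pi.sub_apply, Eb, Fin.ext_iff, Fin.coe_castSucc, Fin.val_succ]
    split_ifs <;> first | exact False.elim (by assumption) | omega

lemma root_inter_root (hr : 3 ≤ r) {i j : Fin r} (hij : i ≠ j) :
    inter (root r i) (root r j) = 0 ∨ inter (root r i) (root r j) = 1 := by
  have hvij : (i:ℕ) ≠ (j:ℕ) := fun h => hij (Fin.ext h)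
  by_cases hi : (i:ℕ) = 0
  · have hj : (j:ℕ) ≠ 0 := by omega
    rw [inter_comm', inter_root_right_zero hr _ hi, root_eq_pos_case hj]
    simp only [Pi.sub_apply, Eb, Fin.ext_iff, Fin.coe_castSucc, Fin.val_succ, Fin.val_zero,
      fv1 hr, fv2 hr, fv3 hr]
    split_ifs <;> first | exact False.elim (by assumption) | (left; omega) | (right; omega)
  · by_cases hj : (j:ℕ) = 0
    · rw [inter_root_right_zero hr _ hj, root_eq_pos_case hi]
      simp only [Pi.sub_apply, Eb, Fin.ext_iff, Fin.coe_castSucc, Fin.val_succ, Fin.val_zero,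
        fv1 hr, fv2 hr, fv3 hr]
      split_ifs <;> first | exact False.elim (by assumption) | (left; omega) | (right; omega)
    · rw [inter_root_right_pos _ hj, root_eq_pos_case hi]
      simp only [Pi.sub_apply, Eb, Fin.ext_iff, Fin.coe_castSucc, Fin.val_succ]
      split_ifs <;> first | exact False.elim (by assumption) | (left; omega) | (right; omega)

/-! #### Reflections -/

lemma reflect_apply' (v x : Fin (r+1) → ℤ) (k : Fin (r+1)) :
    reflect v x k = x k + inter x v * v k := rfl

lemma reflect_add (v x y : Fin (r+1) → ℤ) : reflect v (x + y) = reflect v x + reflect v y := by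
  funext k
  simp only [reflect, inter_add_left, Pi.add_apply, Pi.smul_apply, smul_eq_mul]
  ring

lemma reflect_smul (v : Fin (r+1) → ℤ) (c : ℤ) (x : Fin (r+1) → ℤ) :
    reflect v (c • x) = c • reflect v x := by
  funext k
  simp only [reflect, inter_smul_left, Pi.add_apply, Pi.smul_apply, smul_eq_mul]
  ring

lemma reflect_self (v : Fin (r+1) → ℤ) (hv : inter v v = -2) : reflect v v = -v := by
  funext k
  simp only [reflect, hv, Pi.add_apply, Pi.smul_apply, Pi.neg_apply, smul_eq_mul]
  ring

lemma reflect_reflect (v : Fin (r+1) → ℤ) (hv : inter v v = -2) (x : Fin (r+1) → ℤ) :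
    reflect v (reflect v x) = x := by
  funext k
  simp only [reflect, inter_add_left, inter_smul_left, hv, Pi.add_apply, Pi.smul_apply,
    smul_eq_mul]
  ring

lemma reflect_of_inter_zero (v x : Fin (r+1) → ℤ) (h : inter x v = 0) : reflect v x = x := by
  funext k
  simp [reflect, h]

lemma reflect_of_inter_one (v x : Fin (r+1) → ℤ) (h : inter x v = 1) : reflect v x = x + v := by
  funext k
  simp [reflect, h]

/-! #### Generators and words -/

def sgen (r : ℕ) (i : Fin r) : Function.End (Fin (r+1) → ℤ) := reflect (root r i)

def wprod (r : ℕ) (l : List (Fin r)) : Function.End (Fin (r+1) → ℤ) := (l.map (sgen r)).prod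

@[simp] lemma wprod_nil : wprod r [] = 1 := rfl

@[simp] lemma wprod_cons (i : Fin r) (l : List (Fin r)) :
    wprod r (i :: l) = sgen r i * wprod r l := by
  unfold wprod; rw [List.map_cons, List.prod_cons]

lemma wprod_append (l1 l2 : List (Fin r)) : wprod r (l1 ++ l2) = wprod r l1 * wprod r l2 := by
  unfold wprod; rw [List.map_append, List.prod_append]

@[simp] lemma wprod_singleton (i : Fin r) : wprod r [i] = sgen r i := by
  simp

lemma sgen_invol (hr : 3 ≤ r) (i : Fin r) : sgen r i * sgen r i = 1 := by
  funext x
  exact reflect_reflect _ (root_inter_self hr i) x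

lemma sgen_comm (s t : Fin r) (hst : inter (root r s) (root r t) = 0)
    (hts : inter (root r t) (root r s) = 0) :
    sgen r s * sgen r t = sgen r t * sgen r s := by
  funext x
  show reflect (root r s) (reflect (root r t) x) = reflect (root r t) (reflect (root r s) x)
  funext k
  simp only [reflect, inter_add_left, inter_smul_left, hst, hts, Pi.add_apply, Pi.smul_apply,
    smul_eq_mul]
  ring

lemma sgen_braid (hr : 3 ≤ r) (s t : Fin r) (hst : inter (root r s) (root r t) = 1)
    (hts : inter (root r t) (root r s) = 1) :
    sgen r s * sgen r t * sgen r s = sgen r t * sgen r s * sgen r t := by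
  have hs := root_inter_self hr s
  have ht := root_inter_self hr t
  funext x
  show reflect (root r s) (reflect (root r t) (reflect (root r s) x))
      = reflect (root r t) (reflect (root r s) (reflect (root r t) x))
  funext k
  simp only [reflect, inter_add_left, inter_smul_left, hst, hts, hs, ht, Pi.add_apply,
    Pi.smul_apply, smul_eq_mul]
  ring

/-! #### Linear representation and determinant parity -/

def rlin (r : ℕ) (i : Fin r) : (Fin (r+1) → ℤ) →ₗ[ℤ] (Fin (r+1) → ℤ) where
  toFun := reflect (root r i)
  map_add' := reflect_add _
  map_smul' := fun c x => by simpa using reflect_smul (root r i) c x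

@[simp] lemma rlin_apply (i : Fin r) (x : Fin (r+1) → ℤ) : rlin r i x = reflect (root r i) x := rfl

def lmap (r : ℕ) (l : List (Fin r)) : Module.End ℤ (Fin (r+1) → ℤ) := (l.map (rlin r)).prod

lemma lmap_nil : lmap r [] = 1 := rfl

lemma lmap_cons (i : Fin r) (l : List (Fin r)) : lmap r (i :: l) = rlin r i * lmap r l := by
  unfold lmap; rw [List.map_cons, List.prod_cons]

lemma lmap_coe (l : List (Fin r)) : ⇑(lmap r l) = wprod r l := by
  induction l with
  | nil => rfl
  | cons i l ih =>
    funext x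
    rw [lmap_cons, wprod_cons]
    show rlin r i (lmap r l x) = sgen r i (wprod r l x)
    rw [congrFun ih x]
    rfl

lemma det_rlin (hr : 3 ≤ r) (i : Fin r) : LinearMap.det (rlin r i) = -1 := by
  classical
  rw [← LinearMap.det_toMatrix']
  have hm : LinearMap.toMatrix' (rlin r i)
      = 1 + Matrix.replicateCol Unit (root r i) * Matrix.replicateRow Unit (fun j => inter (Eb r j) (root r i)) := by
    ext k j
    rw [LinearMap.toMatrix'_apply]
    have hEb : (Pi.single j (1:ℤ) : Fin (r+1) → ℤ) = Eb r j := by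
      funext j'; simp [Pi.single_apply, Eb]
    rw [hEb]
    simp only [Matrix.add_apply, Matrix.one_apply, Matrix.mul_apply, Matrix.replicateCol_apply,
      Matrix.replicateRow_apply, Finset.univ_unique, Finset.sum_singleton, rlin_apply]
    rw [reflect_apply']
    show Eb r j k + inter (Eb r j) (root r i) * root r i k = _
    unfold Eb
    ring
  rw [hm, Matrix.det_one_add_replicateCol_mul_replicateRow]
  have hsum : dotProduct (fun j => inter (Eb r j) (root r i)) (root r i)
      = inter (root r i) (root r i) := by
    unfold dotProduct
    have h1 : ∀ j : Fin (r+1), inter (Eb r j) (root r i) * root r i j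
        = (if j = (0:Fin (r+1)) then 2 * (root r i 0 * root r i j) else 0)
          - root r i j * root r i j := by
      intro j
      rw [inter_comm', inter_Eb_right]
      split_ifs with h
      · subst h; ring
      · ring
    rw [Finset.sum_congr rfl fun j _ => h1 j, Finset.sum_sub_distrib,
      Finset.sum_ite_eq' Finset.univ (0 : Fin (r+1)) (fun j => 2 * (root r i 0 * root r i j))]
    simp only [Finset.mem_univ, if_true]
    unfold inter
    ring
  rw [hsum, root_inter_self hr i]
  norm_num

lemma det_lmap (hr : 3 ≤ r) (l : List (Fin r)) :
    LinearMap.det (lmap r l) = (-1 : ℤ)^l.length := by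
  induction l with
  | nil => simp [lmap_nil]
  | cons i l ih =>
    rw [lmap_cons, map_mul, det_rlin hr, ih, List.length_cons, pow_succ]
    ring

lemma wprod_parity (hr : 3 ≤ r) {l l' : List (Fin r)} (h : wprod r l = wprod r l') :
    ((-1:ℤ))^l.length = (-1)^l'.length := by
  have h2 : lmap r l = lmap r l' := by
    apply LinearMap.coe_injective
    rw [lmap_coe, lmap_coe, h]
  rw [← det_lmap hr l, ← det_lmap hr l', h2]

/-! #### Membership in the Weyl group -/

lemma sgen_mem (i : Fin r) : InWeyl r (sgen r i) := Submonoid.subset_closure ⟨i, rfl⟩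

lemma inweyl_mul {f g : Function.End (Fin (r+1) → ℤ)} (hf : InWeyl r f) (hg : InWeyl r g) :
    InWeyl r (f * g) := mul_mem hf hg

lemma wprod_mem (l : List (Fin r)) : InWeyl r (wprod r l) := by
  induction l with
  | nil => exact one_mem _
  | cons i l ih => rw [wprod_cons]; exact mul_mem (sgen_mem i) ih

lemma inweyl_word {f : Function.End (Fin (r+1) → ℤ)} (hf : InWeyl r f) :
    ∃ l : List (Fin r), f = wprod r l := by
  have hf' : f ∈ Submonoid.closure
      { g : Function.End (Fin (r + 1) → ℤ) | ∃ i : Fin r, g = reflect (root r i) } := hf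
  clear hf
  induction hf' using Submonoid.closure_induction with
  | mem g hg => obtain ⟨i, hi⟩ := hg; exact ⟨[i], by simp [hi, sgen]; rfl⟩
  | one => exact ⟨[], rfl⟩
  | mul a b _ _ ha hb =>
    obtain ⟨la, rfl⟩ := ha
    obtain ⟨lb, rfl⟩ := hb
    exact ⟨la ++ lb, (wprod_append la lb).symm⟩

lemma inweyl_add {f : Function.End (Fin (r+1) → ℤ)} (hf : InWeyl r f)
    (x y : Fin (r+1) → ℤ) : f (x + y) = f x + f y := by
  obtain ⟨l, rfl⟩ := inweyl_word hf
  rw [← lmap_coe]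
  exact (lmap r l).map_add x y

lemma inweyl_smulz {f : Function.End (Fin (r+1) → ℤ)} (hf : InWeyl r f)
    (c : ℤ) (x : Fin (r+1) → ℤ) : f (c • x) = c • f x := by
  obtain ⟨l, rfl⟩ := inweyl_word hf
  rw [← lmap_coe]
  exact (lmap r l).map_smul c x

/-! #### Word length -/

noncomputable def wlen (r : ℕ) (f : Function.End (Fin (r+1) → ℤ)) : ℕ :=
  sInf {n | ∃ l : List (Fin r), l.length = n ∧ f = wprod r l}

lemma wlen_le {f : Function.End (Fin (r+1) → ℤ)} {l : List (Fin r)} (h : f = wprod r l) :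
    wlen r f ≤ l.length :=
  Nat.sInf_le ⟨l, rfl, h⟩

lemma wlen_word {f : Function.End (Fin (r+1) → ℤ)} (hf : InWeyl r f) :
    ∃ l : List (Fin r), l.length = wlen r f ∧ f = wprod r l := by
  obtain ⟨l, rfl⟩ := inweyl_word hf
  have h : wlen r (wprod r l) ∈ {n | ∃ l' : List (Fin r), l'.length = n ∧ wprod r l = wprod r l'} :=
    Nat.sInf_mem ⟨l.length, ⟨l, rfl, rfl⟩⟩
  exact h

lemma eq_one_of_wlen_zero {f : Function.End (Fin (r+1) → ℤ)} (hf : InWeyl r f)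
    (h : wlen r f = 0) : f = 1 := by
  obtain ⟨l, hl, rfl⟩ := wlen_word hf
  rw [h] at hl
  rw [List.length_eq_zero_iff.mp hl]
  rfl

lemma wlen_mul_le {f g : Function.End (Fin (r+1) → ℤ)} (hf : InWeyl r f) (hg : InWeyl r g) :
    wlen r (f * g) ≤ wlen r f + wlen r g := by
  obtain ⟨l, hl, hfl⟩ := wlen_word hf
  obtain ⟨l', hl', hfl'⟩ := wlen_word hg
  have : f * g = wprod r (l ++ l') := by rw [wprod_append, hfl, hfl']
  calc wlen r (f * g) ≤ (l ++ l').length := wlen_le this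
  _ = wlen r f + wlen r g := by rw [List.length_append, hl, hl']

lemma wlen_sgen_le (i : Fin r) : wlen r (sgen r i) ≤ 1 :=
  wlen_le (wprod_singleton i).symm

lemma wlen_mul_sgen_ne (hr : 3 ≤ r) {f : Function.End (Fin (r+1) → ℤ)} (hf : InWeyl r f)
    (i : Fin r) : wlen r (f * sgen r i) ≠ wlen r f := by
  obtain ⟨l, hl, hfl⟩ := wlen_word hf
  obtain ⟨l', hl', hfl'⟩ := wlen_word (inweyl_mul hf (sgen_mem i))
  intro he
  have h1 : wprod r (l ++ [i]) = wprod r l' := by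
    rw [wprod_append, wprod_singleton, ← hfl, ← hfl']
  have h2 := wprod_parity hr h1
  simp only [List.length_append, List.length_cons, List.length_nil, zero_add, hl, hl', he] at h2
  have h3 : ((-1:ℤ))^(wlen r f) ≠ 0 := pow_ne_zero _ (by norm_num)
  rw [pow_succ] at h2
  have h4 : ((-1:ℤ))^(wlen r f) * (-1) = ((-1:ℤ))^(wlen r f) * 1 := by rw [mul_one]; exact h2
  have h5 := mul_left_cancel₀ h3 h4
  norm_num at h5

lemma decompose (hr : 3 ≤ r) {f : Function.End (Fin (r+1) → ℤ)} (hf : InWeyl r f)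
    (h0 : wlen r f ≠ 0) :
    ∃ (f' : Function.End (Fin (r+1) → ℤ)) (t : Fin r), InWeyl r f' ∧ f = f' * sgen r t ∧
      wlen r f' + 1 = wlen r f ∧ f * sgen r t = f' := by
  obtain ⟨l, hl, hfl⟩ := wlen_word hf
  obtain hnil | ⟨L, t, rfl⟩ := l.eq_nil_or_concat'
  · exfalso; rw [hnil] at hl; simp at hl; exact h0 hl.symm
  · refine ⟨wprod r L, t, wprod_mem L, ?_, ?_, ?_⟩
    · rw [hfl, wprod_append, wprod_singleton]
    · have hle : wlen r (wprod r L) ≤ L.length := wlen_le rfl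
      have hlen : L.length + 1 = wlen r f := by
        rw [← hl, List.length_append, List.length_cons, List.length_nil]
      have hge : wlen r f ≤ wlen r (wprod r L) + 1 := by
        have e1 : f = wprod r L * sgen r t := by rw [hfl, wprod_append, wprod_singleton]
        calc wlen r f = wlen r (wprod r L * sgen r t) := by rw [← e1]
        _ ≤ wlen r (wprod r L) + wlen r (sgen r t) := wlen_mul_le (wprod_mem L) (sgen_mem t)
        _ ≤ wlen r (wprod r L) + 1 := by have := wlen_sgen_le (r := r) t; omega
      omega
    · rw [hfl, wprod_append, wprod_singleton, mul_assoc, sgen_invol hr, mul_one]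

/-! #### The positive cone -/

def PosC (r : ℕ) (x : Fin (r+1) → ℤ) : Prop :=
  ∃ c : Fin r → ℕ, x = ∑ i, (c i : ℤ) • root r i

lemma posC_root (s : Fin r) : PosC r (root r s) := by
  classical
  refine ⟨fun j => if j = s then 1 else 0, ?_⟩
  have h1 : ∀ i : Fin r, (((if i = s then (1:ℕ) else 0) : ℕ) : ℤ) • root r i
      = if i = s then root r i else 0 := by
    intro i; split_ifs <;> simp
  rw [Finset.sum_congr rfl fun i _ => h1 i, Finset.sum_ite_eq' Finset.univ s (fun i => root r i)]
  simp

lemma posC_add {x y : Fin (r+1) → ℤ} (hx : PosC r x) (hy : PosC r y) : PosC r (x + y) := by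
  obtain ⟨c, rfl⟩ := hx
  obtain ⟨c', rfl⟩ := hy
  refine ⟨fun i => c i + c' i, ?_⟩
  rw [← Finset.sum_add_distrib]
  refine Finset.sum_congr rfl fun i _ => ?_
  push_cast
  rw [add_smul]

lemma inter_sum_right {ι : Type*} (x : Fin (r+1) → ℤ) (s : Finset ι)
    (g : ι → (Fin (r+1) → ℤ)) :
    inter x (∑ i ∈ s, g i) = ∑ i ∈ s, inter x (g i) := by
  induction s using Finset.cons_induction with
  | empty => simpa using inter_zero_right x
  | cons i s hi ih => rw [Finset.sum_cons, inter_add_right, ih, Finset.sum_cons]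

lemma posC_inter_nonneg {H x : Fin (r+1) → ℤ} (hH : ∀ i : Fin r, 0 ≤ inter H (root r i))
    (hx : PosC r x) : 0 ≤ inter H x := by
  obtain ⟨c, rfl⟩ := hx
  rw [inter_sum_right]
  refine Finset.sum_nonneg fun i _ => ?_
  rw [inter_smul_right]
  exact mul_nonneg (Int.natCast_nonneg _) (hH i)

/-! #### Minimal coset representatives -/

lemma min_rep (hr : 3 ≤ r) {f : Function.End (Fin (r+1) → ℤ)} (hf : InWeyl r f)
    (s t : Fin r) (U : List (List (Fin r))) (hU0 : [] ∈ U)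
    (hclose : ∀ j, (j = s ∨ j = t) → ∀ uw ∈ U, ∃ uw2 ∈ U,
      wprod r (j :: uw) = wprod r uw2 ∧ uw2.length ≤ uw.length + 1) :
    ∃ (v : Function.End (Fin (r+1) → ℤ)) (uw : List (Fin r)), InWeyl r v ∧ uw ∈ U ∧
      v * wprod r uw = f ∧ wlen r v + uw.length = wlen r f ∧
      wlen r v < wlen r (v * sgen r s) ∧ wlen r v < wlen r (v * sgen r t) := by
  classical
  have hex : ∃ n, ∃ (v : Function.End (Fin (r+1) → ℤ)) (uw : List (Fin r)),
      InWeyl r v ∧ uw ∈ U ∧ v * wprod r uw = f ∧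
      wlen r v + uw.length = wlen r f ∧ wlen r v = n :=
    ⟨wlen r f, f, [], hf, hU0, by rw [wprod_nil, mul_one], by simp, rfl⟩
  obtain ⟨v, uw, hv, huwU, hvf, hsum, hvn⟩ := Nat.find_spec hex
  have hmin : ∀ j, (j = s ∨ j = t) → wlen r v < wlen r (v * sgen r j) := by
    intro j hj
    rcases lt_or_ge (wlen r v) (wlen r (v * sgen r j)) with h | h
    · exact h
    · exfalso
      have hne := wlen_mul_sgen_ne hr hv j
      have hlt : wlen r (v * sgen r j) < wlen r v := lt_of_le_of_ne h hne
      obtain ⟨uw2, huw2U, heq, hlen2⟩ := hclose j hj uw huwU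
      have hv' : InWeyl r (v * sgen r j) := inweyl_mul hv (sgen_mem j)
      have hvf' : (v * sgen r j) * wprod r uw2 = f := by
        rw [← heq, wprod_cons, ← mul_assoc, mul_assoc v, sgen_invol hr, mul_one, hvf]
      have hge2 : wlen r f ≤ wlen r (v * sgen r j) + uw2.length := by
        calc wlen r f = wlen r ((v * sgen r j) * wprod r uw2) := by rw [hvf']
        _ ≤ wlen r (v * sgen r j) + wlen r (wprod r uw2) := wlen_mul_le hv' (wprod_mem _)
        _ ≤ wlen r (v * sgen r j) + uw2.length := by
            have : wlen r (wprod r uw2) ≤ uw2.length := wlen_le rfl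
            omega
      exact Nat.find_min hex (show wlen r (v * sgen r j) < Nat.find hex by omega)
        ⟨v * sgen r j, uw2, hv', huw2U, hvf', by omega, rfl⟩
  exact ⟨v, uw, hv, huwU, hvf, hsum, hmin s (Or.inl rfl), hmin t (Or.inr rfl)⟩

/-! #### The key positivity theorem -/

lemma T1 (hr : 3 ≤ r) : ∀ n : ℕ, ∀ f : Function.End (Fin (r+1) → ℤ), InWeyl r f →
    wlen r f ≤ n → ∀ s : Fin r, wlen r f < wlen r (f * sgen r s) → PosC r (f (root r s)) := by
  intro n
  induction n using Nat.strong_induction_on with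
  | _ n IH =>
  intro f hf hfn s hs
  by_cases h0 : wlen r f = 0
  · have hf1 := eq_one_of_wlen_zero hf h0
    rw [hf1]
    exact posC_root s
  · obtain ⟨f', t, hf', hft, hlen', hfst⟩ := decompose hr hf h0
    by_cases hts : t = s
    · exfalso
      subst hts
      rw [hfst] at hs
      omega
    · have hst_ne : s ≠ t := Ne.symm hts
      have hself_s := root_inter_self hr s
      have hself_t := root_inter_self hr t
      have hss := sgen_invol hr s
      have htt := sgen_invol hr t
      rcases root_inter_root hr hst_ne with hadj | hadj
      · -- non-adjacent case : m(s,t) = 2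
        have hadj' : inter (root r t) (root r s) = 0 := by rw [inter_comm']; exact hadj
        have hcomm : sgen r s * sgen r t = sgen r t * sgen r s := sgen_comm s t hadj hadj'
        have hcloseS : ∀ uw ∈ [[], [s], [t], [s,t]],
            ∃ uw2 ∈ [([] : List (Fin r)), [s], [t], [s,t]],
            wprod r (s :: uw) = wprod r uw2 ∧ uw2.length ≤ uw.length + 1 := by
          intro uw huw
          simp only [List.mem_cons, List.not_mem_nil, or_false] at huw
          rcases huw with rfl | rfl | rfl | rfl
          · exact ⟨[s], by simp, rfl, by simp⟩
          · refine ⟨[], by simp, ?_, by simp⟩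
            simp only [wprod_cons, wprod_nil, mul_one]
            rw [hss]
          · exact ⟨[s, t], by simp, rfl, by simp⟩
          · refine ⟨[t], by simp, ?_, by simp⟩
            simp only [wprod_cons, wprod_nil, mul_one, wprod_singleton]
            rw [← mul_assoc, hss, one_mul]
        have hcloseT : ∀ uw ∈ [[], [s], [t], [s,t]],
            ∃ uw2 ∈ [([] : List (Fin r)), [s], [t], [s,t]],
            wprod r (t :: uw) = wprod r uw2 ∧ uw2.length ≤ uw.length + 1 := by
          intro uw huw
          simp only [List.mem_cons, List.not_mem_nil, or_false] at huw
          rcases huw with rfl | rfl | rfl | rfl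
          · exact ⟨[t], by simp, rfl, by simp⟩
          · refine ⟨[s, t], by simp, ?_, by simp⟩
            simp only [wprod_cons, wprod_nil, mul_one]
            exact hcomm.symm
          · refine ⟨[], by simp, ?_, by simp⟩
            simp only [wprod_cons, wprod_nil, mul_one]
            rw [htt]
          · refine ⟨[s], by simp, ?_, by simp⟩
            simp only [wprod_cons, wprod_nil, mul_one, wprod_singleton]
            rw [← mul_assoc, ← hcomm, mul_assoc, htt, mul_one]
        have hclose : ∀ j, (j = s ∨ j = t) → ∀ uw ∈ [[], [s], [t], [s,t]],
            ∃ uw2 ∈ [([] : List (Fin r)), [s], [t], [s,t]],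
            wprod r (j :: uw) = wprod r uw2 ∧ uw2.length ≤ uw.length + 1 := by
          intro j hj
          rcases hj with rfl | rfl
          · exact hcloseS
          · exact hcloseT
        obtain ⟨v, uw, hv, huwU, hvf, hsum, hmins, hmint⟩ :=
          min_rep hr hf s t [[], [s], [t], [s,t]] (by simp) hclose
        have huwne : uw ≠ [] := by
          rintro rfl
          rw [wprod_nil, mul_one] at hvf
          rw [hvf, hfst] at hmint
          omega
        have hlv : wlen r v < wlen r f := by
          have hpos : 0 < uw.length := List.length_pos_iff.mpr huwne
          omega
        have hPs : PosC r (v (root r s)) := IH (wlen r v) (by omega) v hv le_rfl s hmins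
        have hPt : PosC r (v (root r t)) := IH (wlen r v) (by omega) v hv le_rfl t hmint
        have happ : f (root r s) = v (wprod r uw (root r s)) := by rw [← hvf]; rfl
        simp only [List.mem_cons, List.not_mem_nil, or_false] at huwU
        rcases huwU with rfl | rfl | rfl | rfl
        · rw [happ, wprod_nil]
          exact hPs
        · exfalso
          have he : f * sgen r s = v := by
            rw [← hvf, wprod_singleton, mul_assoc, hss, mul_one]
          rw [he] at hs
          omega
        · rw [happ, wprod_singleton]
          have he : sgen r t (root r s) = root r s := reflect_of_inter_zero _ _ hadj
          rw [he]
          exact hPs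
        · exfalso
          have he : f * sgen r s = v * sgen r t := by
            rw [← hvf, show wprod r [s,t] = sgen r s * sgen r t from by simp,
              mul_assoc, hcomm, mul_assoc (sgen r t), hss, mul_one]
          have hle : wlen r (f * sgen r s) ≤ wlen r v + 1 := by
            rw [he]
            have hb1 := wlen_mul_le hv (sgen_mem (r := r) t)
            have hb2 := wlen_sgen_le (r := r) t
            omega
          simp only [List.length_cons, List.length_nil] at hsum
          omega
      · -- adjacent case : m(s,t) = 3
        have hadj' : inter (root r t) (root r s) = 1 := by rw [inter_comm']; exact hadj
        have hbraid : sgen r s * sgen r t * sgen r s = sgen r t * sgen r s * sgen r t :=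
          sgen_braid hr s t hadj hadj'
        have hcloseS : ∀ uw ∈ [[], [s], [t], [s,t], [t,s], [s,t,s]],
            ∃ uw2 ∈ [([] : List (Fin r)), [s], [t], [s,t], [t,s], [s,t,s]],
            wprod r (s :: uw) = wprod r uw2 ∧ uw2.length ≤ uw.length + 1 := by
          intro uw huw
          simp only [List.mem_cons, List.not_mem_nil, or_false] at huw
          rcases huw with rfl | rfl | rfl | rfl | rfl | rfl
          · exact ⟨[s], by simp, rfl, by simp⟩
          · refine ⟨[], by simp, ?_, by simp⟩
            simp only [wprod_cons, wprod_nil, mul_one]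
            rw [hss]
          · exact ⟨[s, t], by simp, rfl, by simp⟩
          · refine ⟨[t], by simp, ?_, by simp⟩
            simp only [wprod_cons, wprod_nil, mul_one]
            rw [← mul_assoc, hss, one_mul]
          · exact ⟨[s, t, s], by simp, rfl, by simp⟩
          · refine ⟨[t, s], by simp, ?_, by simp⟩
            simp only [wprod_cons, wprod_nil, mul_one]
            rw [← mul_assoc, hss, one_mul]
        have hcloseT : ∀ uw ∈ [[], [s], [t], [s,t], [t,s], [s,t,s]],
            ∃ uw2 ∈ [([] : List (Fin r)), [s], [t], [s,t], [t,s], [s,t,s]],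
            wprod r (t :: uw) = wprod r uw2 ∧ uw2.length ≤ uw.length + 1 := by
          intro uw huw
          simp only [List.mem_cons, List.not_mem_nil, or_false] at huw
          rcases huw with rfl | rfl | rfl | rfl | rfl | rfl
          · exact ⟨[t], by simp, rfl, by simp⟩
          · exact ⟨[t, s], by simp, rfl, by simp⟩
          · refine ⟨[], by simp, ?_, by simp⟩
            simp only [wprod_cons, wprod_nil, mul_one]
            rw [htt]
          · refine ⟨[s, t, s], by simp, ?_, by simp⟩
            simp only [wprod_cons, wprod_nil, mul_one]
            rw [← mul_assoc, ← mul_assoc]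
            exact hbraid.symm
          · refine ⟨[s], by simp, ?_, by simp⟩
            simp only [wprod_cons, wprod_nil, mul_one]
            rw [← mul_assoc, htt, one_mul]
          · refine ⟨[s, t], by simp, ?_, by simp⟩
            simp only [wprod_cons, wprod_nil, mul_one]
            rw [← mul_assoc, ← mul_assoc, hbraid.symm, mul_assoc, hss, mul_one]
        have hclose : ∀ j, (j = s ∨ j = t) → ∀ uw ∈ [[], [s], [t], [s,t], [t,s], [s,t,s]],
            ∃ uw2 ∈ [([] : List (Fin r)), [s], [t], [s,t], [t,s], [s,t,s]],
            wprod r (j :: uw) = wprod r uw2 ∧ uw2.length ≤ uw.length + 1 := by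
          intro j hj
          rcases hj with rfl | rfl
          · exact hcloseS
          · exact hcloseT
        obtain ⟨v, uw, hv, huwU, hvf, hsum, hmins, hmint⟩ :=
          min_rep hr hf s t [[], [s], [t], [s,t], [t,s], [s,t,s]] (by simp) hclose
        have huwne : uw ≠ [] := by
          rintro rfl
          rw [wprod_nil, mul_one] at hvf
          rw [hvf, hfst] at hmint
          omega
        have hlv : wlen r v < wlen r f := by
          have hpos : 0 < uw.length := List.length_pos_iff.mpr huwne
          omega
        have hPs : PosC r (v (root r s)) := IH (wlen r v) (by omega) v hv le_rfl s hmins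
        have hPt : PosC r (v (root r t)) := IH (wlen r v) (by omega) v hv le_rfl t hmint
        have happ : f (root r s) = v (wprod r uw (root r s)) := by rw [← hvf]; rfl
        simp only [List.mem_cons, List.not_mem_nil, or_false] at huwU
        have he1 : sgen r t (root r s) = root r s + root r t := reflect_of_inter_one _ _ hadj
        rcases huwU with rfl | rfl | rfl | rfl | rfl | rfl
        · rw [happ, wprod_nil]
          exact hPs
        · exfalso
          have he : f * sgen r s = v := by
            rw [← hvf, wprod_singleton, mul_assoc, hss, mul_one]
          rw [he] at hs
          omega
        · rw [happ, wprod_singleton, he1, inweyl_add hv]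
          exact posC_add hPs hPt
        · -- uw = [s,t]
          have he2 : sgen r s (root r s + root r t) = root r t := by
            show reflect (root r s) (root r s + root r t) = root r t
            rw [reflect_add, reflect_self _ hself_s, reflect_of_inter_one _ _ hadj']
            funext k
            simp only [Pi.add_apply, Pi.neg_apply]
            ring
          have e0 : wprod r [s, t] (root r s) = sgen r s (sgen r t (root r s)) := rfl
          rw [happ, e0, he1, he2]
          exact hPt
        · -- uw = [t,s] : exclusion
          exfalso
          have he : f * sgen r s = v * sgen r t := by
            rw [← hvf, show wprod r [t,s] = sgen r t * sgen r s from by simp,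
              mul_assoc, mul_assoc (sgen r t), hss, mul_one]
          have hle : wlen r (f * sgen r s) ≤ wlen r v + 1 := by
            rw [he]
            have hb1 := wlen_mul_le hv (sgen_mem (r := r) t)
            have hb2 := wlen_sgen_le (r := r) t
            omega
          simp only [List.length_cons, List.length_nil] at hsum
          omega
        · -- uw = [s,t,s] : exclusion
          exfalso
          have he : f * sgen r s = v * (sgen r s * sgen r t) := by
            rw [← hvf, show wprod r [s,t,s] = sgen r s * (sgen r t * sgen r s) from by simp,
              mul_assoc]
            rw [show (sgen r s * (sgen r t * sgen r s)) * sgen r s = sgen r s * sgen r t from by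
              rw [mul_assoc, mul_assoc (sgen r t), hss, mul_one]]
          have hle : wlen r (f * sgen r s) ≤ wlen r v + 2 := by
            rw [he]
            have hb1 := wlen_mul_le hv (inweyl_mul (sgen_mem (r := r) s) (sgen_mem (r := r) t))
            have hb2 := wlen_mul_le (sgen_mem (r := r) s) (sgen_mem (r := r) t)
            have hb3 := wlen_sgen_le (r := r) s
            have hb4 := wlen_sgen_le (r := r) t
            omega
          simp only [List.length_cons, List.length_nil] at hsum
          omega

/-! #### The minimality lemma -/

lemma key (hr : 3 ≤ r) (H y : Fin (r+1) → ℤ) (hH : ∀ i : Fin r, 0 ≤ inter H (root r i))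
    (hy : ∀ i : Fin r, 0 ≤ inter y (root r i)) :
    ∀ n : ℕ, ∀ f : Function.End (Fin (r+1) → ℤ), InWeyl r f → wlen r f ≤ n →
      inter H y ≤ inter H (f y) := by
  intro n
  induction n with
  | zero =>
    intro f hf hfn
    have h1 : f = 1 := eq_one_of_wlen_zero hf (Nat.le_zero.mp hfn)
    rw [h1]
    exact le_rfl
  | succ n ih =>
    intro f hf hfn
    by_cases h0 : wlen r f = 0
    · have h1 : f = 1 := eq_one_of_wlen_zero hf h0
      rw [h1]
      exact le_rfl
    · obtain ⟨f', t, hf', hft, hlen', hfst⟩ := decompose hr hf h0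
      have hPos : PosC r (f' (root r t)) := by
        refine T1 hr (wlen r f') f' hf' le_rfl t ?_
        rw [← hft]
        omega
      have hexp : f y = f' y + inter y (root r t) • f' (root r t) := by
        rw [hft]
        show f' (reflect (root r t) y) = _
        rw [show reflect (root r t) y = y + inter y (root r t) • root r t from rfl]
        rw [inweyl_add hf', inweyl_smulz hf']
      rw [hexp, inter_add_right, inter_smul_right]
      have h1 : inter H y ≤ inter H (f' y) := ih f' hf' (by omega)
      have h2 : 0 ≤ inter y (root r t) * inter H (f' (root r t)) :=
        mul_nonneg (hy t) (posC_inter_nonneg hH hPos)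
      linarith

/-! #### Dominance of (E-semi-)standard classes -/

lemma estandard_nonneg (hr : 3 ≤ r) {H : Fin (r+1) → ℤ} (hH : EStandard r H) :
    ∀ i : Fin r, 0 ≤ inter H (root r i) := by
  obtain ⟨h1, hmono, hlast, h12, h123⟩ := hH
  intro i
  by_cases h : (i:ℕ) = 0
  · rw [inter_root_right_zero hr _ h]
    linarith
  · rw [inter_root_right_pos _ h]
    have hm := hmono i.castSucc i.succ (by rw [Fin.coe_castSucc]; omega)
      (by rw [Fin.le_def, Fin.coe_castSucc, Fin.val_succ]; omega)
    linarith

lemma esemistandard_nonneg (hr : 3 ≤ r) {y : Fin (r+1) → ℤ} (hy : ESemiStandard r y) :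
    ∀ i : Fin r, 0 ≤ inter y (root r i) := by
  obtain ⟨h0, h1, hmono, h123⟩ := hy
  intro i
  by_cases h : (i:ℕ) = 0
  · rw [inter_root_right_zero hr _ h]
    linarith
  · rw [inter_root_right_pos _ h]
    have hm := hmono i.castSucc i.succ (by rw [Fin.coe_castSucc]; omega)
      (by rw [Fin.le_def, Fin.coe_castSucc, Fin.val_succ]; omega)
    linarith

/-! #### Inverses -/

lemma wprod_reverse_mul (hr : 3 ≤ r) (l : List (Fin r)) :
    wprod r l.reverse * wprod r l = 1 := by
  induction l with
  | nil => simp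
  | cons i l ih =>
    rw [List.reverse_cons, wprod_append, wprod_singleton, wprod_cons]
    rw [mul_assoc, ← mul_assoc (sgen r i), sgen_invol hr, one_mul]
    exact ih

lemma inweyl_inv (hr : 3 ≤ r) {f : Function.End (Fin (r+1) → ℤ)} (hf : InWeyl r f) :
    ∃ g : Function.End (Fin (r+1) → ℤ), InWeyl r g ∧ g * f = 1 := by
  obtain ⟨l, rfl⟩ := inweyl_word hf
  exact ⟨wprod r l.reverse, wprod_mem _, wprod_reverse_mul hr l⟩

end WeylMinAux

/-- Let `H` be an E-standard class in `Pic_r` and let `D` be a semi-standard class.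
If `σ ∈ W_r` is such that `σ(D)` is E-semi-standard, then for every `τ ∈ W_r` one
has `H·τ(D) ≥ H·σ(D)`: the minimum of `H·τ(D)` over the Weyl group is attained
when `τ(D)` is E-semi-standard. -/
theorem min_intersection_at_semistandard (r : ℕ) (hr : 3 ≤ r)
    (H D : Fin (r + 1) → ℤ)
    (hH : EStandard r H) (hD : SemiStandard r D)
    (σ : (Fin (r + 1) → ℤ) → (Fin (r + 1) → ℤ)) (hσ : InWeyl r σ)
    (hσD : ESemiStandard r (σ D))
    (τ : (Fin (r + 1) → ℤ) → (Fin (r + 1) → ℤ)) (hτ : InWeyl r τ) :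
    inter H (σ D) ≤ inter H (τ D) := by
  obtain ⟨lσ, rfl⟩ := WeylMinAux.inweyl_word hσ
  obtain ⟨lτ, rfl⟩ := WeylMinAux.inweyl_word hτ
  have hg : InWeyl r (WeylMinAux.wprod r lσ.reverse) := WeylMinAux.wprod_mem _
  have hgσ := WeylMinAux.wprod_reverse_mul hr lσ
  have hw : InWeyl r (WeylMinAux.wprod r lτ * WeylMinAux.wprod r lσ.reverse) :=
    WeylMinAux.inweyl_mul hτ hg
  have hkey := WeylMinAux.key hr H (WeylMinAux.wprod r lσ D)
    (WeylMinAux.estandard_nonneg hr hH) (WeylMinAux.esemistandard_nonneg hr hσD)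
    (WeylMinAux.wlen r (WeylMinAux.wprod r lτ * WeylMinAux.wprod r lσ.reverse)) _ hw le_rfl
  have happ : (WeylMinAux.wprod r lτ * WeylMinAux.wprod r lσ.reverse)
      (WeylMinAux.wprod r lσ D) = WeylMinAux.wprod r lτ D := by
    exact congrArg (WeylMinAux.wprod r lτ) (congrFun hgσ D)
  rw [happ] at hkey
  exact hkey
end

section
/- Let H = dE_0 − m_1E_1 − ⋯ − m_rE_r be an E-standard class in Pic_r. Then for every exceptional class E one has H·E ≥ m_r; that is, H·E_r = m_r is the minimum value of H·E over all exceptional classes E. -/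
open Finset

/-! ### Auxiliary machinery -/

section basic
variable {r : ℕ}

lemma inter_comm' (x y : Fin (r+1) → ℤ) : inter x y = inter y x := by
  unfold inter
  congr 1
  · ring
  · exact Finset.sum_congr rfl fun i _ => mul_comm _ _

lemma inter_add_right (x y z : Fin (r+1) → ℤ) :
    inter x (y + z) = inter x y + inter x z := by
  unfold inter
  simp [Pi.add_apply, mul_add, Finset.sum_add_distrib]
  ring

lemma inter_sub_right (x y z : Fin (r+1) → ℤ) :
    inter x (y - z) = inter x y - inter x z := by
  unfold inter
  simp [Pi.sub_apply, mul_sub, Finset.sum_sub_distrib]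
  ring

lemma inter_smul_right (x y : Fin (r+1) → ℤ) (c : ℤ) :
    inter x (c • y) = c * inter x y := by
  unfold inter
  have : (∑ i, x i * (c • y) i) = c * ∑ i, x i * y i := by
    rw [Finset.mul_sum]
    exact Finset.sum_congr rfl fun i _ => by simp [Pi.smul_apply]; ring
  rw [this, Pi.smul_apply, smul_eq_mul]
  ring

lemma inter_add_left (x y z : Fin (r+1) → ℤ) :
    inter (x + y) z = inter x z + inter y z := by
  rw [inter_comm', inter_add_right, inter_comm' z x, inter_comm' z y]

lemma inter_sub_left (x y z : Fin (r+1) → ℤ) :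
    inter (x - y) z = inter x z - inter y z := by
  rw [inter_comm', inter_sub_right, inter_comm' z x, inter_comm' z y]

lemma inter_smul_left (x y : Fin (r+1) → ℤ) (c : ℤ) :
    inter (c • x) y = c * inter x y := by
  rw [inter_comm', inter_smul_right, inter_comm']

lemma inter_zero_right (x : Fin (r+1) → ℤ) : inter x 0 = 0 := by
  unfold inter; simp

/-- `inter x ·` as an additive monoid hom. -/
def interHom (x : Fin (r+1) → ℤ) : (Fin (r+1) → ℤ) →+ ℤ where
  toFun := inter x
  map_zero' := inter_zero_right x
  map_add' := inter_add_right x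

lemma inter_sum_right {s : Finset (Fin r)} (x : Fin (r+1) → ℤ)
    (f : Fin r → (Fin (r+1) → ℤ)) :
    inter x (∑ i ∈ s, f i) = ∑ i ∈ s, inter x (f i) :=
  map_sum (interHom x) f s

lemma inter_Eb_Eb (a b : Fin (r+1)) :
    inter (Eb r a) (Eb r b) =
      if a = 0 ∧ b = 0 then 1 else if a = b then -1 else 0 := by
  unfold inter Eb
  have key : ∀ i : Fin (r+1), (if i = a then (1:ℤ) else 0) * (if i = b then 1 else 0)
      = if i = a ∧ i = b then 1 else 0 := by
    intro i
    by_cases h1 : i = a <;> by_cases h2 : i = b <;> simp [h1, h2]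
  rw [Finset.sum_congr rfl fun i _ => key i]
  by_cases hab : a = b
  · subst hab
    simp only [and_self, Finset.sum_ite_eq', Finset.mem_univ, if_true]
    by_cases ha : a = 0
    · subst ha; simp
    · have : ¬((0:Fin (r+1)) = a) := fun h => ha h.symm
      simp [this, ha]
  · have hz : (∑ i : Fin (r+1), if i = a ∧ i = b then (1:ℤ) else 0) = 0 := by
      apply Finset.sum_eq_zero; intro i _
      split_ifs with h
      · exact absurd (h.1.symm.trans h.2) hab
      · rfl
    rw [hz]
    have h0 : ¬(a = 0 ∧ b = 0) := fun ⟨h1, h2⟩ => hab (h1.trans h2.symm)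
    rw [if_neg h0, if_neg hab]
    rcases (not_and_or.mp h0) with h | h
    · rw [if_neg (fun hh : (0:Fin (r+1)) = a => h hh.symm)]; ring
    · rw [if_neg (fun hh : (0:Fin (r+1)) = b => h hh.symm)]; ring

lemma val1 (hr : 3 ≤ r) : ((1 : Fin (r+1)) : ℕ) = 1 := by
  have : ((1 : Fin (r+1)) : ℕ) = 1 % (r+1) := rfl
  rw [this, Nat.mod_eq_of_lt (by omega)]
lemma val2 (hr : 3 ≤ r) : ((2 : Fin (r+1)) : ℕ) = 2 := by
  have : ((2 : Fin (r+1)) : ℕ) = 2 % (r+1) := rfl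
  rw [this, Nat.mod_eq_of_lt (by omega)]
lemma val3 (hr : 3 ≤ r) : ((3 : Fin (r+1)) : ℕ) = 3 := by
  have : ((3 : Fin (r+1)) : ℕ) = 3 % (r+1) := rfl
  rw [this, Nat.mod_eq_of_lt (by omega)]

lemma inter_Eb_Eb' (a b : Fin (r+1)) :
    inter (Eb r a) (Eb r b) =
      if (a:ℕ) = 0 ∧ (b:ℕ) = 0 then 1 else if (a:ℕ) = (b:ℕ) then -1 else 0 := by
  rw [inter_Eb_Eb]
  congr 1 <;> simp only [Fin.ext_iff, Fin.val_zero]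

lemma root_norm (hr : 3 ≤ r) (i : Fin r) : inter (root r i) (root r i) = -2 := by
  have hi := i.isLt
  unfold root
  by_cases h : (i : ℕ) = 0 <;>
    simp only [h, if_true, if_false, inter_sub_left, inter_sub_right, inter_Eb_Eb',
      Fin.val_zero, val1 hr, val2 hr, val3 hr, Fin.coe_castSucc, Fin.val_succ]
  · norm_num
  · have e1 : ¬((i:ℕ) = (i:ℕ)+1) := by omega
    have e2 : ¬((i:ℕ)+1 = (i:ℕ)) := by omega
    have e3 : ¬((i:ℕ)+1 = 0) := by omega
    simp [h, e1, e2, e3]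

lemma gram_offdiag (hr : 3 ≤ r) {j k : Fin r} (h : j ≠ k) :
    inter (root r j) (root r k) = 0 ∨ inter (root r j) (root r k) = 1 := by
  have hj := j.isLt
  have hk := k.isLt
  have hjk : (j : ℕ) ≠ (k : ℕ) := fun hh => h (Fin.ext hh)
  unfold root
  by_cases h1 : (j : ℕ) = 0 <;> by_cases h2 : (k : ℕ) = 0
  · exact absurd (h1.trans h2.symm) hjk
  · simp only [h1, h2, if_true, if_false, inter_sub_left, inter_sub_right, inter_Eb_Eb',
      Fin.val_zero, val1 hr, val2 hr, val3 hr, Fin.coe_castSucc, Fin.val_succ]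
    have : (k:ℕ) = 1 ∨ (k:ℕ) = 2 ∨ (k:ℕ) = 3 ∨ 4 ≤ (k:ℕ) := by omega
    rcases this with hc | hc | hc | hc
    · simp [hc]
    · simp [hc]
    · simp [hc]
    · have n1 : ¬((1:ℕ) = (k:ℕ)) := by omega
      have n2 : ¬((2:ℕ) = (k:ℕ)) := by omega
      have n3 : ¬((3:ℕ) = (k:ℕ)) := by omega
      have m1 : ¬((1:ℕ) = (k:ℕ)+1) := by omega
      have m2 : ¬((2:ℕ) = (k:ℕ)+1) := by omega
      have m3 : ¬((3:ℕ) = (k:ℕ)+1) := by omega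
      simp [n1, n2, n3, m1, m2, m3, h2, show ¬((0:ℕ) = (k:ℕ)) from by omega]
  · simp only [h1, h2, if_true, if_false, inter_sub_left, inter_sub_right, inter_Eb_Eb',
      Fin.val_zero, val1 hr, val2 hr, val3 hr, Fin.coe_castSucc, Fin.val_succ]
    have : (j:ℕ) = 1 ∨ (j:ℕ) = 2 ∨ (j:ℕ) = 3 ∨ 4 ≤ (j:ℕ) := by omega
    rcases this with hc | hc | hc | hc
    · simp [hc]
    · simp [hc]
    · simp [hc]
    · have n1 : ¬((j:ℕ) = 1) := by omega
      have n2 : ¬((j:ℕ) = 2) := by omega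
      have n3 : ¬((j:ℕ) = 3) := by omega
      have m1 : ¬((j:ℕ)+1 = 1) := by omega
      have m2 : ¬((j:ℕ)+1 = 2) := by omega
      have m3 : ¬((j:ℕ)+1 = 3) := by omega
      have m0 : ¬((j:ℕ)+1 = 0) := by omega
      simp [n1, n2, n3, m1, m2, m3, m0, h1, show ¬((j:ℕ) = 0) from h1]
  · simp only [h1, h2, if_true, if_false, inter_sub_left, inter_sub_right, inter_Eb_Eb',
      Fin.val_zero, val1 hr, val2 hr, val3 hr, Fin.coe_castSucc, Fin.val_succ]
    by_cases c1 : (j:ℕ) = (k:ℕ)+1 <;> by_cases c2 : (j:ℕ)+1 = (k:ℕ) <;>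
      [skip; skip; skip; skip] <;>
      first
      | (exfalso; omega)
      | (simp [h1, h2, hjk, c1, c2, show ¬((j:ℕ)+1 = (k:ℕ)+1) from by omega,
          show ¬((j:ℕ)+1 = 0) from by omega, show ¬((k:ℕ)+1 = 0) from by omega,
          show ¬((k:ℕ)+1+1 = (k:ℕ)) from by omega,
          show ¬((j:ℕ)+1+1 = (j:ℕ)) from by omega])

lemma reflect_add (v x y : Fin (r+1) → ℤ) :
    reflect v (x + y) = reflect v x + reflect v y := by
  unfold reflect
  rw [inter_add_left, add_smul]
  abel

lemma reflect_smul (v : Fin (r+1) → ℤ) (c : ℤ) (x : Fin (r+1) → ℤ) :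
    reflect v (c • x) = c • reflect v x := by
  unfold reflect
  rw [inter_smul_left, smul_add, smul_smul]

lemma reflect_reflect {v : Fin (r+1) → ℤ} (hv : inter v v = -2) (x : Fin (r+1) → ℤ) :
    reflect v (reflect v x) = x := by
  unfold reflect
  rw [inter_add_left, inter_smul_left, hv]
  have : (inter x v + inter x v * -2) = - inter x v := by ring
  rw [this, neg_smul]
  abel

lemma reflect_braid_aux {v w : Fin (r+1) → ℤ} (hv : inter v v = -2)
    (hvw : inter v w = 1) (hwv : inter w v = 1) (x : Fin (r+1) → ℤ) :
    reflect v (reflect w (reflect v x)) = x + (inter x v + inter x w) • (v + w) := by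
  unfold reflect
  rw [inter_add_left, inter_smul_left, hvw]
  rw [inter_add_left, inter_add_left, inter_smul_left, inter_smul_left, hv, hwv]
  module

lemma reflect_comm_aux {v w : Fin (r+1) → ℤ} (hvw : inter v w = 0) (hwv : inter w v = 0)
    (x : Fin (r+1) → ℤ) :
    reflect v (reflect w x) = reflect w (reflect v x) := by
  unfold reflect
  rw [inter_add_left, inter_smul_left, hwv, inter_add_left, inter_smul_left, hvw]
  module

end basic

section endstuff
variable {r : ℕ}

/-- The generator `σ_i` as an endomorphism. -/
def sg (r : ℕ) (i : Fin r) : Function.End (Fin (r + 1) → ℤ) := reflect (root r i)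

lemma sg_invol (hr : 3 ≤ r) (i : Fin r) : sg r i * sg r i = 1 := by
  funext x
  exact reflect_reflect (root_norm hr i) x

lemma sg_braid (hr : 3 ≤ r) {j k : Fin r}
    (hjk : inter (root r j) (root r k) = 1) (hkj : inter (root r k) (root r j) = 1) :
    sg r j * sg r k * sg r j = sg r k * sg r j * sg r k := by
  funext x
  show reflect (root r j) (reflect (root r k) (reflect (root r j) x))
      = reflect (root r k) (reflect (root r j) (reflect (root r k) x))
  rw [reflect_braid_aux (root_norm hr j) hjk hkj x,
    reflect_braid_aux (root_norm hr k) hkj hjk x]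
  rw [add_comm (inter x (root r k)), add_comm (root r k)]

lemma sg_comm (hr : 3 ≤ r) {j k : Fin r}
    (hjk : inter (root r j) (root r k) = 0) (hkj : inter (root r k) (root r j) = 0) :
    sg r j * sg r k = sg r k * sg r j := by
  funext x
  exact reflect_comm_aux hjk hkj x

/-- Product of generators indexed by a word. -/
def gword (r : ℕ) (om : List (Fin r)) : Function.End (Fin (r + 1) → ℤ) :=
  (om.map (sg r)).prod

lemma gword_nil : gword r [] = 1 := rfl

lemma gword_append (a b : List (Fin r)) : gword r (a ++ b) = gword r a * gword r b := by
  unfold gword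
  rw [List.map_append, List.prod_append]

lemma gword_singleton (j : Fin r) : gword r [j] = sg r j := by
  unfold gword
  simp

lemma gword_cons (i : Fin r) (a : List (Fin r)) :
    gword r (i :: a) = sg r i * gword r a := by
  unfold gword
  rw [List.map_cons, List.prod_cons]

lemma gword_add (om : List (Fin r)) (x y : Fin (r+1) → ℤ) :
    gword r om (x + y) = gword r om x + gword r om y := by
  induction om with
  | nil => rfl
  | cons i a ih =>
      rw [gword_cons]
      show (sg r i) (gword r a (x+y)) = _
      rw [ih]
      exact reflect_add _ _ _

lemma gword_smul (om : List (Fin r)) (c : ℤ) (x : Fin (r+1) → ℤ) :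
    gword r om (c • x) = c • gword r om x := by
  induction om with
  | nil => rfl
  | cons i a ih =>
      rw [gword_cons]
      show (sg r i) (gword r a (c • x)) = _
      rw [ih]
      exact reflect_smul _ _ _

/-- Membership in the Weyl monoid, by an explicit word. -/
def InW (r : ℕ) (f : Function.End (Fin (r + 1) → ℤ)) : Prop :=
  ∃ om : List (Fin r), gword r om = f

lemma InW_one : InW r 1 := ⟨[], rfl⟩

lemma InW_mul_sg {f : Function.End (Fin (r + 1) → ℤ)} (hf : InW r f) (j : Fin r) :
    InW r (f * sg r j) := by
  obtain ⟨om, rfl⟩ := hf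
  exact ⟨om ++ [j], by rw [gword_append]; rfl⟩

/-- Word length of an element of the Weyl monoid. -/
noncomputable def len (r : ℕ) (f : Function.End (Fin (r + 1) → ℤ)) : ℕ :=
  sInf {n | ∃ om : List (Fin r), om.length = n ∧ gword r om = f}

lemma len_le {f : Function.End (Fin (r + 1) → ℤ)} {om : List (Fin r)}
    (h : gword r om = f) : len r f ≤ om.length :=
  Nat.sInf_le ⟨om, rfl, h⟩

lemma len_word {f : Function.End (Fin (r + 1) → ℤ)} (hf : InW r f) :
    ∃ om : List (Fin r), om.length = len r f ∧ gword r om = f := by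
  obtain ⟨om, hom⟩ := hf
  have hne : {n | ∃ om : List (Fin r), om.length = n ∧ gword r om = f}.Nonempty :=
    ⟨om.length, om, rfl, hom⟩
  exact Nat.sInf_mem hne

lemma len_zero_eq_one {f : Function.End (Fin (r + 1) → ℤ)} (hf : InW r f)
    (h : len r f = 0) : f = 1 := by
  obtain ⟨om, h1, h2⟩ := len_word hf
  rw [h] at h1
  rw [List.length_eq_zero_iff] at h1
  rw [h1] at h2
  exact h2.symm

lemma mul_sg_sg (hr : 3 ≤ r) (f : Function.End (Fin (r + 1) → ℤ)) (j : Fin r) :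
    f * sg r j * sg r j = f := by
  rw [mul_assoc, sg_invol hr, mul_one]

lemma len_mul_sg_le {f : Function.End (Fin (r + 1) → ℤ)} (hf : InW r f) (j : Fin r) :
    len r (f * sg r j) ≤ len r f + 1 := by
  obtain ⟨om, h1, h2⟩ := len_word hf
  have : gword r (om ++ [j]) = f * sg r j := by rw [gword_append, h2]; rfl
  calc len r (f * sg r j) ≤ (om ++ [j]).length := len_le this
    _ = len r f + 1 := by simp [h1]

lemma len_le_len_mul_sg (hr : 3 ≤ r) {f : Function.End (Fin (r + 1) → ℤ)}
    (hf : InW r f) (j : Fin r) : len r f ≤ len r (f * sg r j) + 1 := by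
  have h := len_mul_sg_le (InW_mul_sg hf j) j
  rwa [mul_sg_sg hr] at h

lemma descent (hr : 3 ≤ r) {f : Function.End (Fin (r + 1) → ℤ)} (hf : InW r f)
    (h : len r f ≠ 0) : ∃ j : Fin r, len r (f * sg r j) < len r f := by
  obtain ⟨om, h1, h2⟩ := len_word hf
  have hne : om ≠ [] := by
    intro hnil; rw [hnil] at h1; simp at h1; exact h (h1.symm)
  obtain ⟨L, j, rfl⟩ := List.eq_nil_or_concat om |>.resolve_left hne
  refine ⟨j, ?_⟩
  have key : f * sg r j = gword r L := by
    rw [← h2, List.concat_eq_append, gword_append, gword_singleton, mul_sg_sg hr]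
  have h3 : len r (f * sg r j) ≤ L.length := len_le key.symm
  have h4 : L.length + 1 = len r f := by
    rw [← h1, List.concat_eq_append]; simp
  omega

end endstuff


section poscomb
variable {r : ℕ}

/-- A nonnegative integer combination of the simple roots. -/
def PosComb (r : ℕ) (z : Fin (r+1) → ℤ) : Prop :=
  ∃ c : Fin r → ℤ, (∀ i, 0 ≤ c i) ∧ z = ∑ i, c i • root r i

lemma posComb_root (k : Fin r) : PosComb r (root r k) := by
  classical
  refine ⟨fun m => if m = k then 1 else 0, ?_, ?_⟩
  · intro i
    dsimp only
    split_ifs <;> norm_num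
  · have key : ∀ m : Fin r, ((if m = k then (1:ℤ) else 0) • root r m)
        = if m = k then root r m else 0 := by
      intro m; split_ifs <;> simp
    simp only
    rw [Finset.sum_congr rfl fun m _ => key m,
      Finset.sum_ite_eq' Finset.univ k (fun i => root r i)]
    simp

lemma posComb_add {z₁ z₂ : Fin (r+1) → ℤ} (h1 : PosComb r z₁) (h2 : PosComb r z₂) :
    PosComb r (z₁ + z₂) := by
  obtain ⟨c1, hc1, rfl⟩ := h1
  obtain ⟨c2, hc2, rfl⟩ := h2
  refine ⟨c1 + c2, fun i => by have := hc1 i; have := hc2 i; simp only [Pi.add_apply]; omega, ?_⟩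
  rw [← Finset.sum_add_distrib]
  exact Finset.sum_congr rfl fun i _ => by simp [add_smul]

lemma posComb_inter_nonneg {H z : Fin (r+1) → ℤ}
    (hdom : ∀ i : Fin r, 0 ≤ inter H (root r i)) (hz : PosComb r z) :
    0 ≤ inter H z := by
  obtain ⟨c, hc, rfl⟩ := hz
  rw [inter_sum_right]
  apply Finset.sum_nonneg
  intro i _
  rw [inter_smul_right]
  exact mul_nonneg (hc i) (hdom i)

end poscomb

section thmA
variable {r : ℕ}

lemma InW_apply_add {f : Function.End (Fin (r+1) → ℤ)} (hf : InW r f)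
    (x y : Fin (r+1) → ℤ) : f (x + y) = f x + f y := by
  obtain ⟨om, rfl⟩ := hf
  exact gword_add om x y

lemma InW_apply_smul {f : Function.End (Fin (r+1) → ℤ)} (hf : InW r f)
    (c : ℤ) (x : Fin (r+1) → ℤ) : f (c • x) = c • f x := by
  obtain ⟨om, rfl⟩ := hf
  exact gword_smul om c x

/-- Key positivity theorem: if right-multiplying by `σ_k` does not decrease the
length, then `w` maps the simple root `r_k` to a nonnegative combination of
simple roots. -/
lemma thmA (hr : 3 ≤ r) :
    ∀ n : ℕ, ∀ f : Function.End (Fin (r+1) → ℤ), InW r f → len r f ≤ n →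
      ∀ k : Fin r, len r f ≤ len r (f * sg r k) → PosComb r (f (root r k)) := by
  intro n
  induction n with
  | zero =>
      intro f hf hlen k _
      have : f = 1 := len_zero_eq_one hf (Nat.le_zero.mp hlen)
      rw [this]
      exact posComb_root k
  | succ n ih =>
      intro f hf hlen k hk
      by_cases h0 : len r f = 0
      · have : f = 1 := len_zero_eq_one hf h0
        rw [this]
        exact posComb_root k
      · obtain ⟨j, hj⟩ := descent hr hf h0
        have hjk : j ≠ k := by
          rintro rfl
          omega
        have hw1 : InW r (f * sg r j) := InW_mul_sg hf j
        have hfw1 : f = (f * sg r j) * sg r j := (mul_sg_sg hr f j).symm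
        have hup := len_le_len_mul_sg hr hf j
        have hw1len : len r (f * sg r j) + 1 = len r f := by omega
        have happly : ∀ x, f x = (f * sg r j) (sg r j x) := fun x => by
          conv_lhs => rw [hfw1]
          rfl
        rcases gram_offdiag hr (Ne.symm hjk) with c0 | c1
        · -- orthogonal case : inter (root k) (root j) = 0
          have c0' : inter (root r j) (root r k) = 0 := by rw [inter_comm']; exact c0
          have act : sg r j (root r k) = root r k := by
            show reflect (root r j) (root r k) = root r k
            unfold reflect
            rw [c0, zero_smul, add_zero]
          have hstep : len r (f * sg r j) ≤ len r ((f * sg r j) * sg r k) := by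
            by_contra hlt
            push_neg at hlt
            have haux : sg r j * (sg r k * sg r j) = sg r k := by
              rw [← sg_comm hr c0' c0, ← mul_assoc, sg_invol hr, one_mul]
            have hcomm : ((f * sg r j) * sg r k) * sg r j = f * sg r k := by
              simp only [mul_assoc]
              rw [haux]
            have h1 : len r (f * sg r k) ≤ len r ((f * sg r j) * sg r k) + 1 := by
              rw [← hcomm]
              exact len_mul_sg_le (InW_mul_sg hw1 k) j
            omega
          have hpos := ih (f * sg r j) hw1 (by omega) k hstep
          rw [happly, act]
          exact hpos
        · -- adjacent case : inter (root k) (root j) = 1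
          have c1' : inter (root r j) (root r k) = 1 := by rw [inter_comm']; exact c1
          have act1 : sg r j (root r k) = root r k + root r j := by
            show reflect (root r j) (root r k) = root r k + root r j
            unfold reflect
            rw [c1, one_smul]
          by_cases hbk : len r (f * sg r j) ≤ len r ((f * sg r j) * sg r k)
          · -- Sub A
            have hposk := ih (f * sg r j) hw1 (by omega) k hbk
            have hposj := ih (f * sg r j) hw1 (by omega) j (by rw [← hfw1]; omega)
            rw [happly, act1, InW_apply_add hw1]
            exact posComb_add hposk hposj
          · -- Sub B
            push_neg at hbk
            have hw2 : InW r ((f * sg r j) * sg r k) := InW_mul_sg hw1 k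
            have hw1w2 : f * sg r j = ((f * sg r j) * sg r k) * sg r k :=
              (mul_sg_sg hr (f * sg r j) k).symm
            have hup2 := len_le_len_mul_sg hr hw1 k
            have hw2len : len r ((f * sg r j) * sg r k) + 1 = len r (f * sg r j) := by omega
            have hstep : len r ((f * sg r j) * sg r k)
                ≤ len r (((f * sg r j) * sg r k) * sg r j) := by
              by_contra hlt2
              push_neg at hlt2
              have e1 : f * sg r k
                  = ((((f * sg r j) * sg r k) * sg r j) * sg r k) * sg r j := by
                conv_lhs => rw [hfw1, hw1w2]
                calc ((((f * sg r j) * sg r k) * sg r k) * sg r j) * sg r k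
                    = ((f * sg r j) * sg r k) * (sg r k * sg r j * sg r k) := by
                      simp only [mul_assoc]
                  _ = ((f * sg r j) * sg r k) * (sg r j * sg r k * sg r j) := by
                      rw [← sg_braid hr c1' c1]
                  _ = ((((f * sg r j) * sg r k) * sg r j) * sg r k) * sg r j := by
                      simp only [mul_assoc]
              have h1 : len r (f * sg r k)
                  ≤ len r (((f * sg r j) * sg r k) * sg r j) + 2 := by
                calc len r (f * sg r k)
                    ≤ len r ((((f * sg r j) * sg r k) * sg r j) * sg r k) + 1 := by
                      rw [e1]
                      exact len_mul_sg_le (InW_mul_sg (InW_mul_sg hw2 j) k) j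
                  _ ≤ len r (((f * sg r j) * sg r k) * sg r j) + 2 := by
                      have := len_mul_sg_le (InW_mul_sg hw2 j) k
                      omega
              omega
            have hposj := ih ((f * sg r j) * sg r k) hw2 (by omega) j hstep
            have act2 : sg r k (root r k + root r j) = root r j := by
              show reflect (root r k) (root r k + root r j) = root r j
              rw [reflect_add]
              unfold reflect
              rw [root_norm hr k, c1']
              module
            have key : f (root r k) = ((f * sg r j) * sg r k) (root r j) := by
              rw [happly, act1]
              conv_lhs => rw [hw1w2]
              show ((f * sg r j) * sg r k) (sg r k (root r k + root r j)) = _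
              rw [act2]
            rw [key]
            exact hposj

end thmA


section final
variable {r : ℕ}

lemma inter_x_Eb (x : Fin (r+1) → ℤ) (a : Fin (r+1)) :
    inter x (Eb r a) = if a = 0 then x 0 else -(x a) := by
  unfold inter Eb
  have : (∑ i : Fin (r+1), x i * (if i = a then 1 else 0)) = x a := by
    rw [Finset.sum_congr rfl fun i _ => (by split_ifs <;> simp :
      (x i * (if i = a then (1:ℤ) else 0)) = if i = a then x i else 0)]
    rw [Finset.sum_ite_eq' Finset.univ a (fun i => x i)]
    simp
  rw [this]
  by_cases ha : a = 0
  · subst ha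
    simp
    try ring
  · have h2 : ¬((0 : Fin (r+1)) = a) := fun h => ha h.symm
    simp only [if_neg h2, if_neg ha]
    ring

lemma last_ne_zero (hr : 3 ≤ r) : (Fin.last r) ≠ (0 : Fin (r+1)) := by
  intro h
  have h2 : (Fin.last r).val = (0 : Fin (r+1)).val := congrArg Fin.val h
  simp only [Fin.val_last, Fin.val_zero] at h2
  omega

lemma inter_H_Er (hr : 3 ≤ r) (H : Fin (r+1) → ℤ) :
    inter H (Eb r (Fin.last r)) = -H (Fin.last r) := by
  rw [inter_x_Eb, if_neg (last_ne_zero hr)]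

lemma inter_Er_root_nonneg (hr : 3 ≤ r) (j : Fin r) :
    0 ≤ inter (Eb r (Fin.last r)) (root r j) := by
  have hj := j.isLt
  unfold root
  by_cases h : (j : ℕ) = 0 <;>
    simp only [h, if_true, if_false, inter_sub_right, inter_Eb_Eb',
      Fin.val_zero, val1 hr, val2 hr, val3 hr, Fin.coe_castSucc, Fin.val_succ,
      Fin.val_last] <;>
    split_ifs <;> omega

lemma dominance (hr : 3 ≤ r) {H : Fin (r+1) → ℤ} (hst : EStandard r H) (i : Fin r) :
    0 ≤ inter H (root r i) := by
  obtain ⟨h1, hmono, hlast, h12, h123⟩ := hst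
  have hi := i.isLt
  unfold root
  by_cases h : (i : ℕ) = 0
  · simp only [h, if_true, inter_sub_right, inter_x_Eb]
    have n1 : ¬((1 : Fin (r+1)) = 0) := by
      intro hh
      have h2 := congrArg Fin.val hh
      rw [val1 hr, Fin.val_zero] at h2
      omega
    have n2 : ¬((2 : Fin (r+1)) = 0) := by
      intro hh
      have h2 := congrArg Fin.val hh
      rw [val2 hr, Fin.val_zero] at h2
      omega
    have n3 : ¬((3 : Fin (r+1)) = 0) := by
      intro hh
      have h2 := congrArg Fin.val hh
      rw [val3 hr, Fin.val_zero] at h2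
      omega
    rw [if_neg n1, if_neg n2, if_neg n3]
    linarith
  · simp only [h, if_false, inter_sub_right, inter_x_Eb]
    have n1 : ¬(i.castSucc = (0 : Fin (r+1))) := by
      intro hh
      have h2 := congrArg Fin.val hh
      rw [Fin.coe_castSucc, Fin.val_zero] at h2
      omega
    have n2 : ¬(i.succ = (0 : Fin (r+1))) := Fin.succ_ne_zero i
    rw [if_neg n1, if_neg n2]
    have hm := hmono i.castSucc i.succ
      (by rw [Fin.coe_castSucc]; omega)
      (by rw [Fin.le_def, Fin.coe_castSucc, Fin.val_succ]; omega)
    linarith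

lemma InWeyl_to_InW {f : Function.End (Fin (r+1) → ℤ)} (h : InWeyl r f) : InW r f := by
  obtain ⟨l, hl, hprod⟩ :=
    @Submonoid.exists_list_of_mem_closure (Function.End (Fin (r+1) → ℤ)) _ _ _ h
  subst hprod
  clear h
  induction l with
  | nil => exact ⟨[], rfl⟩
  | cons g t ih =>
      obtain ⟨i, hi⟩ := hl g List.mem_cons_self
      obtain ⟨om, hom⟩ := ih (fun y hy => hl y (List.mem_cons_of_mem g hy))
      refine ⟨i :: om, ?_⟩
      rw [gword_cons, List.prod_cons, hom, hi]
      rfl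

lemma main_ind (hr : 3 ≤ r) {H : Fin (r+1) → ℤ} (hst : EStandard r H) :
    ∀ n : ℕ, ∀ f : Function.End (Fin (r+1) → ℤ), InW r f → len r f ≤ n →
      -H (Fin.last r) ≤ inter H (f (Eb r (Fin.last r))) := by
  intro n
  induction n with
  | zero =>
      intro f hf hlen
      have : f = 1 := len_zero_eq_one hf (Nat.le_zero.mp hlen)
      rw [this]
      rw [show (1 : Function.End (Fin (r+1) → ℤ)) (Eb r (Fin.last r)) = Eb r (Fin.last r)
        from rfl]
      rw [inter_H_Er hr]
  | succ n ih =>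
      intro f hf hlen
      by_cases h0 : len r f = 0
      · have : f = 1 := len_zero_eq_one hf h0
        rw [this]
        rw [show (1 : Function.End (Fin (r+1) → ℤ)) (Eb r (Fin.last r)) = Eb r (Fin.last r)
          from rfl]
        rw [inter_H_Er hr]
      · obtain ⟨j, hj⟩ := descent hr hf h0
        have hw1 : InW r (f * sg r j) := InW_mul_sg hf j
        have hfw1 : f = (f * sg r j) * sg r j := (mul_sg_sg hr f j).symm
        have hup := len_le_len_mul_sg hr hf j
        have key : f (Eb r (Fin.last r))
            = (f * sg r j) (Eb r (Fin.last r))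
              + inter (Eb r (Fin.last r)) (root r j) • (f * sg r j) (root r j) := by
          conv_lhs => rw [hfw1]
          show (f * sg r j) (sg r j (Eb r (Fin.last r))) = _
          rw [show sg r j (Eb r (Fin.last r))
              = Eb r (Fin.last r) + inter (Eb r (Fin.last r)) (root r j) • root r j
            from rfl]
          rw [InW_apply_add hw1, InW_apply_smul hw1]
        rw [key, inter_add_right, inter_smul_right]
        have hpos : PosComb r ((f * sg r j) (root r j)) := by
          apply thmA hr (len r (f * sg r j)) (f * sg r j) hw1 le_rfl j
          rw [← hfw1]
          omega
        have h2 : 0 ≤ inter (Eb r (Fin.last r)) (root r j)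
            * inter H ((f * sg r j) (root r j)) :=
          mul_nonneg (inter_Er_root_nonneg hr j)
            (posComb_inter_nonneg (dominance hr hst) hpos)
        have h3 := ih (f * sg r j) hw1 (by omega)
        linarith

end final

/-- Let `H = dE_0 − m_1E_1 − ⋯ − m_rE_r` be an E-standard class in `Pic_r`. Then for
every exceptional class `E` one has `H·E ≥ m_r`; that is, `H·E_r = m_r` is the
minimum value of `H·E` over all exceptional classes `E` (recall `m_r = -H r`). -/

theorem min_on_exceptional (r : ℕ) (hr : 3 ≤ r) (H : Fin (r + 1) → ℤ)
    (hst : EStandard r H) :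
    inter H (Eb r (Fin.last r)) = -H (Fin.last r) ∧
      ∀ Ex : Fin (r + 1) → ℤ, Exceptional r Ex → -H (Fin.last r) ≤ inter H Ex := by
  constructor
  · exact inter_H_Er hr H
  · rintro Ex ⟨f, hfW, rfl⟩
    have hf : InW r f := InWeyl_to_InW hfW
    exact main_ind hr hst (len r f) f hf le_rfl
end

section
/- Let E = dE_0 − m_1E_1 − ⋯ − m_rE_r be an E-standard class in Pic_r satisfying E·E = 1 and E·K = 1 (equivalently d² − Σm_i² = 1 and Σm_i = 3d + 1). Then (d; m_1, …, m_r), after discarding trailing zeros, is one of the following three sequences: (4; 2, 1, 1, 1, 1, 1, 1, 1, 1, 1, 1, 1) — the class G_1 = 4E_0 − 2E_1 − E_2 − ⋯ − E_12; (6; 2, 2, 2, 2, 2, 2, 2, 2, 1, 1, 1) — the class G_2 = 6E_0 − 2E_1 − ⋯ − 2E_8 − E_9 − E_10 − E_11; or (9; 3, 3, 3, 3, 3, 3, 3, 3, 2, 2) — the class G_3 = 9E_0 − 3E_1 − ⋯ − 3E_8 − 2E_9 − 2E_10. In particular r ≥ 10. -/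
open Finset

/-! Write `t = m_3`. Since `0 ≤ m_i ≤ t` for `i ≥ 3`, the defect `∑_{i ≥ 3} m_i (t - m_i)` is
nonnegative; by `∑ m_i = 3d + 1` and `∑ m_i² = d² - 1` it equals
`t (3d + 1 - m_1 - m_2) - (d² - 1 - m_1² - m_2²)`, and together with `m_1 + m_2 + t ≤ d` this
forces either `d = 3t, m_1 = m_2 = t` or `(d; m_1, m_2, m_3) = (4; 2, 1, 1)`. In the second case
the `m_i` with `i ≥ 2` are `0` or `1` and sum to `11`. In the first the defect is `t + 1` while
`∑_{i ≥ 3} m_i = 7t + 1`; a multiplicity below `t` is at most its own defect term, so exactly six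
of the `m_i` with `i ≥ 3` equal `t`, and the others lie in `{0, t - 1}` and sum to `t + 1`.
Hence `t - 1 ∣ 2`, so `t ∈ {2, 3}`. -/

theorem AntitoneOn.eq_of_sum_Ico_eq {f : ℕ → ℤ} {a N n : ℕ} {v : ℤ}
    (hf : AntitoneOn f (Set.Ici a)) (hv : 0 < v) (hval : ∀ i, a ≤ i → f i = 0 ∨ f i = v)
    (hzero : ∀ i, N ≤ i → f i = 0) (hsum : ∑ i ∈ Ico a N, f i = n * v) :
    (∀ i, a ≤ i → i < a + n → f i = v) ∧ ∀ i, a + n ≤ i → f i = 0 := by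
  set S := {j ∈ Ico a N | f j = v}
  have hcard : #S = n := by
    have hsum' : ∑ i ∈ Ico a N, f i = #S * v := by
      rw [← nsmul_eq_mul, ← sum_const, sum_filter]
      refine sum_congr rfl fun j hj => ?_
      rcases hval j (mem_Ico.1 hj).1 with h0 | h0 <;> simp [h0, hv.ne]
    exact_mod_cast mul_right_cancel₀ hv.ne' (hsum'.symm.trans hsum)
  have hzero_le : ∀ i, a ≤ i → f i = 0 → a + n ≤ i := by
    intro i hi hfi
    have hsub : S ⊆ Ico a i := by
      intro j hj
      rw [mem_filter, mem_Ico] at hj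
      refine mem_Ico.2 ⟨hj.1.1, lt_of_not_ge fun hij => ?_⟩
      have := hf hi hj.1.1 hij
      omega
    have := card_le_card hsub
    rw [hcard, Nat.card_Ico] at this
    omega
  have hv_lt : ∀ i, a ≤ i → f i = v → i < a + n := by
    intro i hi hfi
    have hiN : i < N := lt_of_not_ge fun h => by have := hzero i h; omega
    have hsub : Ico a (i + 1) ⊆ S := by
      intro j hj
      rw [mem_Ico] at hj
      have := hf (show j ∈ Set.Ici a from hj.1) hi (by omega)
      simp only [S, mem_filter, mem_Ico]
      rcases hval j hj.1 with h0 | h0 <;> omega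
    have := card_le_card hsub
    rw [hcard, Nat.card_Ico] at this
    omega
  refine ⟨fun i hi hin => ?_, fun i hi => ?_⟩
  · exact (hval i hi).resolve_left fun h0 => by have := hzero_le i hi h0; omega
  · exact (hval i (by omega)).resolve_right fun h0 => by have := hv_lt i (by omega) h0; omega

theorem sum_Ico_one_eq_add_sum_Ico_three {M : Type*} [AddCommMonoid M] (f : ℕ → M) {N : ℕ}
    (hN : 3 ≤ N) : ∑ i ∈ Ico 1 N, f i = f 1 + f 2 + ∑ i ∈ Ico 3 N, f i := by
  rw [← sum_Ico_consecutive f (by norm_num : 1 ≤ 3) hN]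
  simp [sum_Ico_succ_top]

theorem eq_three_mul_or_eq_four_of_defect_nonneg {a b t d : ℤ}
    (hdef : 0 ≤ t * (3 * d + 1 - a - b) - (d ^ 2 - 1 - a ^ 2 - b ^ 2))
    (ht : 1 ≤ t) (hab : b ≤ a) (htb : t ≤ b) (hd : a + b + t ≤ d) :
    (d = 3 * t ∧ a = t ∧ b = t) ∨ (d = 4 ∧ a = 2 ∧ b = 1 ∧ t = 1) := by
  -- the defect is `t + 1` minus three terms, each nonnegative
  have hbound : 2 * t * (d - 3 * t) + (d - a - b - t) * (d + a + b - 4 * t) +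
      2 * (a - t) * (b - t) ≤ t + 1 := by
    linear_combination hdef
  have hp2 : 0 ≤ (d - a - b - t) * (d + a + b - 4 * t) := mul_nonneg (by linarith) (by linarith)
  have hp3 : 0 ≤ 2 * (a - t) * (b - t) := mul_nonneg (by linarith) (by linarith)
  have he : d = 3 * t ∨ (d = 4 ∧ t = 1) := by
    rcases (show d = 3 * t ∨ 3 * t + 1 ≤ d by omega) with he | he
    · exact Or.inl he
    · have ht1 : t = 1 := by nlinarith
      subst ht1
      right
      constructor <;> nlinarith
  rcases he with he | ⟨rfl, rfl⟩
  · left; omega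
  · right
    have hs : a + b = 3 := by nlinarith
    have : b = 1 := by nlinarith
    omega

/-- Numerical conditions satisfied by the multiplicities `(d; m_1, …, m_{N-1})` of an E-standard
class `E` with `E·E = 1` and `E·K = 1`, the sequence being extended by `m i = 0` for `i ≥ N`. -/
structure IsGenusTwoSeq (N : ℕ) (d : ℤ) (m : ℕ → ℤ) : Prop where
  three_le : 3 ≤ N
  antitoneOn : AntitoneOn m (Set.Ici 1)
  eq_zero : ∀ i, N ≤ i → m i = 0
  sum_three_le : m 1 + m 2 + m 3 ≤ d
  sum_eq : ∑ i ∈ Ico 1 N, m i = 3 * d + 1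
  sum_sq_eq : ∑ i ∈ Ico 1 N, m i ^ 2 = d ^ 2 - 1

namespace IsGenusTwoSeq

variable {N : ℕ} {d : ℤ} {m : ℕ → ℤ}

theorem antitone (h : IsGenusTwoSeq N d m) {i j : ℕ} (hi : 1 ≤ i) (hij : i ≤ j) : m j ≤ m i :=
  h.antitoneOn hi (le_trans hi hij : j ∈ Set.Ici 1) hij

theorem nonneg (h : IsGenusTwoSeq N d m) {i : ℕ} (hi : 1 ≤ i) : 0 ≤ m i :=
  h.eq_zero _ (le_max_right i N) ▸ h.antitone hi (le_max_left i N)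

theorem lt_of_ne_zero (h : IsGenusTwoSeq N d m) {i : ℕ} (hi : m i ≠ 0) : i < N :=
  lt_of_not_ge fun hN => hi (h.eq_zero i hN)

theorem mul_sub_nonneg (h : IsGenusTwoSeq N d m) {i : ℕ} (hi : 3 ≤ i) :
    0 ≤ m i * (m 3 - m i) :=
  mul_nonneg (h.nonneg (by omega)) (sub_nonneg.2 (h.antitone (by norm_num) hi))

theorem sum_Ico_three (h : IsGenusTwoSeq N d m) :
    ∑ i ∈ Ico 3 N, m i = 3 * d + 1 - m 1 - m 2 := by
  linarith [sum_Ico_one_eq_add_sum_Ico_three m h.three_le, h.sum_eq]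

theorem sum_sq_Ico_three (h : IsGenusTwoSeq N d m) :
    ∑ i ∈ Ico 3 N, m i ^ 2 = d ^ 2 - 1 - m 1 ^ 2 - m 2 ^ 2 := by
  linarith [sum_Ico_one_eq_add_sum_Ico_three (m · ^ 2) h.three_le, h.sum_sq_eq]

theorem sum_mul_sub_Ico_three (h : IsGenusTwoSeq N d m) (c : ℤ) :
    ∑ i ∈ Ico 3 N, m i * (c - m i) =
      c * (3 * d + 1 - m 1 - m 2) - (d ^ 2 - 1 - m 1 ^ 2 - m 2 ^ 2) := by
  simp only [mul_sub, sum_sub_distrib, ← sq, mul_comm (m _) c, ← mul_sum, h.sum_Ico_three,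
    h.sum_sq_Ico_three]

theorem sum_Ico_three_le (h : IsGenusTwoSeq N d m) :
    ∑ i ∈ Ico 3 N, m i ≤ ((N : ℤ) - 3) * m 3 := by
  calc ∑ i ∈ Ico 3 N, m i ≤ #(Ico 3 N) • m 3 :=
        sum_le_card_nsmul _ _ _ fun i hi => h.antitone (by norm_num) (mem_Ico.1 hi).1
    _ = ((N : ℤ) - 3) * m 3 := by rw [Nat.card_Ico, nsmul_eq_mul, Nat.cast_sub h.three_le]; rfl

theorem three_mul_apply_three_le (h : IsGenusTwoSeq N d m) : 3 * m 3 ≤ d := by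
  linarith [h.sum_three_le, h.antitone (i := 1) (j := 3) le_rfl (by norm_num),
    h.antitone (i := 2) (j := 3) (by norm_num) (by norm_num)]

theorem one_le_apply_three (h : IsGenusTwoSeq N d m) : 1 ≤ m 3 := by
  by_contra! ht
  have hN : (3 : ℤ) ≤ N := by exact_mod_cast h.three_le
  have := mul_nonpos_of_nonneg_of_nonpos (sub_nonneg.2 hN) (Int.lt_add_one_iff.1 ht)
  linarith [h.sum_Ico_three, h.sum_Ico_three_le, h.sum_three_le, h.nonneg (i := 1) le_rfl,
    h.nonneg (i := 2) (by norm_num), h.nonneg (i := 3) (by norm_num)]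

theorem eleven_le (h : IsGenusTwoSeq N d m) : 11 ≤ N := by
  have : (11 : ℤ) ≤ N := by
    nlinarith [h.sum_Ico_three, h.sum_Ico_three_le, h.sum_three_le, h.three_mul_apply_three_le,
      h.one_le_apply_three]
  exact_mod_cast this

theorem balanced_or_eq_four (h : IsGenusTwoSeq N d m) :
    (d = 3 * m 3 ∧ m 1 = m 3 ∧ m 2 = m 3) ∨ (d = 4 ∧ m 1 = 2 ∧ m 2 = 1 ∧ m 3 = 1) :=
  eq_three_mul_or_eq_four_of_defect_nonneg
    (h.sum_mul_sub_Ico_three (m 3) ▸ sum_nonneg fun i hi => h.mul_sub_nonneg (mem_Ico.1 hi).1)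
    h.one_le_apply_three (h.antitone le_rfl (by norm_num)) (h.antitone (by norm_num) (by norm_num))
    h.sum_three_le

theorem sum_Ico_of_balanced (h : IsGenusTwoSeq N d m)
    (hb : d = 3 * m 3 ∧ m 1 = m 3 ∧ m 2 = m 3) {k : ℕ} (hk : 3 ≤ k) (hkN : k ≤ N)
    (heq : ∀ i, 3 ≤ i → i < k → m i = m 3) :
    ∑ i ∈ Ico k N, m i = (10 - k) * m 3 + 1 ∧ ∑ i ∈ Ico k N, m i * (m 3 - m i) = m 3 + 1 := by
  obtain ⟨hd, h1, h2⟩ := hb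
  have hhead : ∀ i ∈ Ico 3 k, m i = m 3 := fun i hi => heq i (mem_Ico.1 hi).1 (mem_Ico.1 hi).2
  have hS := h.sum_Ico_three
  have hD := h.sum_mul_sub_Ico_three (m 3)
  rw [← sum_Ico_consecutive _ hk hkN] at hS hD
  rw [sum_congr rfl hhead, sum_const, Nat.card_Ico, nsmul_eq_mul, Nat.cast_sub hk] at hS
  rw [sum_congr rfl fun i hi => by rw [hhead i hi, sub_self, mul_zero], sum_const_zero] at hD
  rw [h1, h2, hd] at hS hD
  exact ⟨by linear_combination hS, by linear_combination hD⟩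

theorem apply_eq_of_le_eight (h : IsGenusTwoSeq N d m)
    (hb : d = 3 * m 3 ∧ m 1 = m 3 ∧ m 2 = m 3) : ∀ i, 1 ≤ i → i ≤ 8 → m i = m 3 := by
  suffices h8 : m 8 = m 3 from fun i hi hi8 => by
    linarith [h.antitone hi hi8, h.antitone le_rfl hi, hb.2.1]
  by_contra hne
  have hlt : m 8 < m 3 := lt_of_le_of_ne (h.antitone (by norm_num) (by norm_num)) hne
  have hN := h.eleven_le
  obtain ⟨hS, hD⟩ := h.sum_Ico_of_balanced hb le_rfl (by omega) fun i hi hi' => by omega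
  rw [← sum_Ico_consecutive _ (by norm_num : 3 ≤ 8) (by omega : 8 ≤ N), Nat.cast_ofNat] at hS
  have hhead : ∑ i ∈ Ico 3 8, m i ≤ 5 * m 3 := by
    simpa using sum_le_card_nsmul (Ico 3 8) m (m 3)
      fun i hi => h.antitone (by norm_num) (mem_Ico.1 hi).1
  -- below `m 3` every multiplicity is at most its own defect term `m i * (m 3 - m i)`
  have htail : ∑ i ∈ Ico 8 N, m i ≤ ∑ i ∈ Ico 8 N, m i * (m 3 - m i) :=
    sum_le_sum fun i hi => le_mul_of_one_le_right (h.nonneg (by grind))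
      (by linarith [h.antitone (by norm_num : 1 ≤ 8) (mem_Ico.1 hi).1])
  have hsub : ∑ i ∈ Ico 8 N, m i * (m 3 - m i) ≤ ∑ i ∈ Ico 3 N, m i * (m 3 - m i) :=
    sum_le_sum_of_subset_of_nonneg (Ico_subset_Ico (by norm_num) le_rfl)
      fun i hi _ => h.mul_sub_nonneg (mem_Ico.1 hi).1
  linarith [h.one_le_apply_three]

theorem apply_nine_lt (h : IsGenusTwoSeq N d m)
    (hb : d = 3 * m 3 ∧ m 1 = m 3 ∧ m 2 = m 3) : m 9 < m 3 := by
  refine lt_of_le_of_ne (h.antitone (by norm_num) (by norm_num)) fun h9 => ?_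
  have hN := h.eleven_le
  obtain ⟨hS, hD⟩ := h.sum_Ico_of_balanced hb (k := 10) (by norm_num) (by omega)
    fun i hi hi' =>
      le_antisymm (h.antitone (by norm_num) hi) (h9 ▸ h.antitone (by omega) (by omega))
  -- a nonnegative integer `x` satisfies `x * (m 3 - x) ≤ (m 3 - 1) * x`
  have hle : ∑ i ∈ Ico 10 N, m i * (m 3 - m i) ≤ (m 3 - 1) * ∑ i ∈ Ico 10 N, m i := by
    rw [mul_sum]
    refine sum_le_sum fun i hi => ?_
    rcases (h.nonneg (i := i) (by grind)).eq_or_lt with h0 | h0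
    · rw [← h0]; simp
    · nlinarith
  rw [hS, hD, Nat.cast_ofNat] at hle
  linarith

theorem sum_Ico_nine_of_balanced (h : IsGenusTwoSeq N d m)
    (hb : d = 3 * m 3 ∧ m 1 = m 3 ∧ m 2 = m 3) :
    ∑ i ∈ Ico 9 N, m i = m 3 + 1 ∧ ∑ i ∈ Ico 9 N, m i * (m 3 - m i) = m 3 + 1 := by
  have hN := h.eleven_le
  obtain ⟨hS, hD⟩ := h.sum_Ico_of_balanced hb (k := 9) (by norm_num) (by omega)
    fun j hj hj' => h.apply_eq_of_le_eight hb j (by omega) (by omega)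
  rw [Nat.cast_ofNat] at hS
  exact ⟨by linear_combination hS, hD⟩

theorem apply_eq_zero_or_eq_sub_one (h : IsGenusTwoSeq N d m)
    (hb : d = 3 * m 3 ∧ m 1 = m 3 ∧ m 2 = m 3) {i : ℕ} (hi : 9 ≤ i) :
    m i = 0 ∨ m i = m 3 - 1 := by
  rcases le_or_gt N i with hiN | hiN
  · exact Or.inl (h.eq_zero i hiN)
  obtain ⟨hS, hD⟩ := h.sum_Ico_nine_of_balanced hb
  have hnonneg : ∀ j ∈ Ico 9 N, 0 ≤ m j * (m 3 - 1 - m j) := fun j hj =>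
    mul_nonneg (h.nonneg (by grind))
      (by linarith [h.antitone (by norm_num) (mem_Ico.1 hj).1, h.apply_nine_lt hb])
  have hzero : ∑ j ∈ Ico 9 N, m j * (m 3 - 1 - m j) = 0 := by
    simp only [mul_sub, mul_one, sum_sub_distrib] at hD ⊢
    linarith
  rcases mul_eq_zero.1 ((sum_eq_zero_iff_of_nonneg hnonneg).1 hzero i (mem_Ico.2 ⟨hi, hiN⟩))
    with h0 | h0
  · exact Or.inl h0
  · exact Or.inr (by linarith)

theorem apply_three_eq_two_or_three (h : IsGenusTwoSeq N d m)
    (hb : d = 3 * m 3 ∧ m 1 = m 3 ∧ m 2 = m 3) : m 3 = 2 ∨ m 3 = 3 := by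
  have hdvd : m 3 - 1 ∣ ∑ i ∈ Ico 9 N, m i := dvd_sum fun i hi => by
    rcases h.apply_eq_zero_or_eq_sub_one hb (mem_Ico.1 hi).1 with h0 | h0 <;> simp [h0]
  rw [(h.sum_Ico_nine_of_balanced hb).1, show m 3 + 1 = (m 3 - 1) + 2 by ring,
    dvd_add_right (dvd_refl _)] at hdvd
  have hpos : 0 < m 3 - 1 := by
    rcases (sub_nonneg.2 h.one_le_apply_three).eq_or_lt with h0 | h0
    · rw [← h0, zero_dvd_iff] at hdvd; norm_num at hdvd
    · exact h0
  have := Int.le_of_dvd (by norm_num) hdvd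
  omega

theorem eq_block_of_balanced (h : IsGenusTwoSeq N d m)
    (hb : d = 3 * m 3 ∧ m 1 = m 3 ∧ m 2 = m 3) (hpos : 1 < m 3) {n : ℕ}
    (hn : (n : ℤ) * (m 3 - 1) = m 3 + 1) :
    (∀ i, 9 ≤ i → i < 9 + n → m i = m 3 - 1) ∧ ∀ i, 9 + n ≤ i → m i = 0 :=
  AntitoneOn.eq_of_sum_Ico_eq (h.antitoneOn.mono (Set.Ici_subset_Ici.2 (by norm_num)))
    (by linarith) (fun _ hi => h.apply_eq_zero_or_eq_sub_one hb hi) h.eq_zero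
    ((h.sum_Ico_nine_of_balanced hb).1.trans hn.symm)

theorem eq_block_of_eq_four (h : IsGenusTwoSeq N d m) (hd : d = 4) (h1 : m 1 = 2)
    (h2 : m 2 = 1) : (∀ i, 2 ≤ i → i < 13 → m i = 1) ∧ ∀ i, 13 ≤ i → m i = 0 := by
  refine AntitoneOn.eq_of_sum_Ico_eq (n := 11)
    (h.antitoneOn.mono (Set.Ici_subset_Ici.2 (by norm_num))) one_pos (fun i hi => ?_) h.eq_zero ?_
  · have := h.nonneg (i := i) (by omega)
    have := h.antitone (i := 2) (by norm_num) hi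
    omega
  · rw [sum_eq_sum_Ico_succ_bot (by have := h.three_le; omega), Nat.cast_ofNat]
    linarith [h.sum_Ico_three]

theorem classification (h : IsGenusTwoSeq N d m) :
    (13 ≤ N ∧ d = 4 ∧ m 1 = 2 ∧ (∀ i, 2 ≤ i → i ≤ 12 → m i = 1) ∧ ∀ i, 12 < i → m i = 0) ∨
    (12 ≤ N ∧ d = 6 ∧ (∀ i, 1 ≤ i → i ≤ 8 → m i = 2) ∧ (∀ i, 9 ≤ i → i ≤ 11 → m i = 1) ∧
      ∀ i, 11 < i → m i = 0) ∨
    (11 ≤ N ∧ d = 9 ∧ (∀ i, 1 ≤ i → i ≤ 8 → m i = 3) ∧ (∀ i, 9 ≤ i → i ≤ 10 → m i = 2) ∧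
      ∀ i, 10 < i → m i = 0) := by
  rcases h.balanced_or_eq_four with hb | ⟨hd, h1, h2, -⟩
  · have hhead := h.apply_eq_of_le_eight hb
    have hd := hb.1
    right
    rcases h.apply_three_eq_two_or_three hb with ht | ht
    · obtain ⟨hmid, htail⟩ := h.eq_block_of_balanced hb (by omega) (n := 3) (by rw [ht]; norm_num)
      rw [ht] at hhead hmid hd
      have hN : 11 < N := h.lt_of_ne_zero (by rw [hmid 11 (by norm_num) (by norm_num)]; norm_num)
      exact Or.inl ⟨hN, hd, hhead, fun i hi hi' => hmid i hi (by omega),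
        fun i hi => htail i (by omega)⟩
    · obtain ⟨hmid, htail⟩ := h.eq_block_of_balanced hb (by omega) (n := 2) (by rw [ht]; norm_num)
      rw [ht] at hhead hmid hd
      have hN : 10 < N := h.lt_of_ne_zero (by rw [hmid 10 (by norm_num) (by norm_num)]; norm_num)
      exact Or.inr ⟨hN, hd, hhead, fun i hi hi' => hmid i hi (by omega),
        fun i hi => htail i (by omega)⟩
  · obtain ⟨hmid, htail⟩ := h.eq_block_of_eq_four hd h1 h2
    have hN : 12 < N := h.lt_of_ne_zero (by rw [hmid 12 (by norm_num) (by norm_num)]; norm_num)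
    exact Or.inl ⟨hN, hd, h1, fun i hi hi' => hmid i hi (by omega), fun i hi => htail i (by omega)⟩

end IsGenusTwoSeq

def multSeq {r : ℕ} (H : Fin (r + 1) → ℤ) (i : ℕ) : ℤ :=
  if hi : i < r + 1 then -H ⟨i, hi⟩ else 0

section multSeq

variable {r : ℕ} (H : Fin (r + 1) → ℤ)

theorem multSeq_val (i : Fin (r + 1)) : multSeq H i = -H i := by
  rw [multSeq, dif_pos i.isLt]

theorem multSeq_ofNat (k : ℕ) (hk : k < r + 1) : multSeq H k = -H (OfNat.ofNat k) := by
  rw [← multSeq_val, Fin.coe_ofNat_eq_mod]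
  exact congrArg _ (Nat.mod_eq_of_lt hk).symm

theorem multSeq_of_le {i : ℕ} (hi : r + 1 ≤ i) : multSeq H i = 0 := by
  rw [multSeq, dif_neg (by omega)]

theorem sum_Ico_multSeq (f : ℤ → ℤ) :
    ∑ i ∈ Ico 1 (r + 1), f (multSeq H i) = ∑ i : Fin r, f (-H i.succ) := by
  rw [sum_Ico_eq_sum_range, Nat.add_sub_cancel, ← Fin.sum_univ_eq_sum_range]
  refine sum_congr rfl fun i _ => ?_
  rw [← multSeq_val, Fin.val_succ, add_comm]

theorem multSeq_antitoneOn (hst : EStandard r H) : AntitoneOn (multSeq H) (Set.Ici 1) := by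
  obtain ⟨-, hsorted, hlast, -⟩ := hst
  have hnonneg : ∀ i, 1 ≤ i → 0 ≤ multSeq H i := fun i hi => by
    rcases lt_or_ge i (r + 1) with hir | hir
    · rw [multSeq, dif_pos hir]
      exact hlast.trans (hsorted ⟨i, hir⟩ (Fin.last r) hi (Fin.le_last _))
    · rw [multSeq_of_le H hir]
  intro i hi j hj hij
  rcases lt_or_ge j (r + 1) with hjr | hjr
  · rw [multSeq, dif_pos hjr, multSeq, dif_pos (by omega)]
    exact hsorted ⟨i, by omega⟩ ⟨j, hjr⟩ hi hij
  · rw [multSeq_of_le H hjr]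
    exact hnonneg i hi

end multSeq

theorem isGenusTwoSeq_multSeq {r : ℕ} {H : Fin (r + 1) → ℤ} (hr : 3 ≤ r) (hst : EStandard r H)
    (h1 : inter H H = 1) (h2 : inter H (Kc r) = 1) : IsGenusTwoSeq (r + 1) (H 0) (multSeq H) where
  three_le := by omega
  antitoneOn := multSeq_antitoneOn H hst
  eq_zero _ := multSeq_of_le H
  sum_three_le := by
    rw [multSeq_ofNat H 1 (by omega), multSeq_ofNat H 2 (by omega), multSeq_ofNat H 3 (by omega)]
    exact hst.2.2.2.2
  sum_eq := by
    rw [show ∑ i ∈ Ico 1 (r + 1), multSeq H i = _ from sum_Ico_multSeq H id]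
    simp only [inter, Kc, ↓reduceIte, mul_neg, mul_ite, mul_one, Fin.sum_univ_succ,
      Fin.succ_ne_zero, id_eq, sum_neg_distrib] at h2 ⊢
    linarith
  sum_sq_eq := by
    rw [sum_Ico_multSeq H (· ^ 2)]
    simp only [inter, Fin.sum_univ_succ, sq, mul_neg, neg_mul, neg_neg] at h1 ⊢
    linarith

/-- Let `E = dE_0 − m_1E_1 − ⋯ − m_rE_r` be an E-standard class in `Pic_r` with
`E·E = 1` and `E·K = 1`. Then `(d; m_1, …, m_r)`, after discarding trailing zeros,
is one of the three sequences
`G_1 = 4E_0 − 2E_1 − E_2 − ⋯ − E_12`,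
`G_2 = 6E_0 − 2E_1 − ⋯ − 2E_8 − E_9 − E_10 − E_11`,
`G_3 = 9E_0 − 3E_1 − ⋯ − 3E_8 − 2E_9 − 2E_10`.
In particular `r ≥ 10` (recall `d = H 0`, `m_i = -H i`). -/
theorem isolated_genus_two_classes (r : ℕ) (hr : 3 ≤ r) (H : Fin (r + 1) → ℤ)
    (hst : EStandard r H) (h1 : inter H H = 1) (h2 : inter H (Kc r) = 1) :
    10 ≤ r ∧
      ((12 ≤ r ∧ H 0 = 4 ∧
          (∀ i : Fin (r + 1), (i : ℕ) = 1 → H i = -2) ∧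
          (∀ i : Fin (r + 1), 2 ≤ (i : ℕ) → (i : ℕ) ≤ 12 → H i = -1) ∧
          (∀ i : Fin (r + 1), 12 < (i : ℕ) → H i = 0)) ∨
        (11 ≤ r ∧ H 0 = 6 ∧
          (∀ i : Fin (r + 1), 1 ≤ (i : ℕ) → (i : ℕ) ≤ 8 → H i = -2) ∧
          (∀ i : Fin (r + 1), 9 ≤ (i : ℕ) → (i : ℕ) ≤ 11 → H i = -1) ∧
          (∀ i : Fin (r + 1), 11 < (i : ℕ) → H i = 0)) ∨
        (10 ≤ r ∧ H 0 = 9 ∧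
          (∀ i : Fin (r + 1), 1 ≤ (i : ℕ) → (i : ℕ) ≤ 8 → H i = -3) ∧
          (∀ i : Fin (r + 1), 9 ≤ (i : ℕ) → (i : ℕ) ≤ 10 → H i = -2) ∧
          (∀ i : Fin (r + 1), 10 < (i : ℕ) → H i = 0))) := by
  have hm := isGenusTwoSeq_multSeq hr hst h1 h2
  have hH : ∀ i : Fin (r + 1), H i = -multSeq H i := fun i => by rw [multSeq_val, neg_neg]
  refine ⟨by have := hm.eleven_le; omega, ?_⟩
  rcases hm.classification with
    ⟨hN, hd, hm1, hmid, htail⟩ | ⟨hN, hd, hhead, hmid, htail⟩ | ⟨hN, hd, hhead, hmid, htail⟩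
  · exact Or.inl ⟨by omega, hd, fun i hi => by simp [hH, hi, hm1],
      fun i hi hi' => by simp [hH, hmid i hi hi'], fun i hi => by simp [hH, htail i hi]⟩
  · exact Or.inr <| Or.inl ⟨by omega, hd, fun i hi hi' => by simp [hH, hhead i hi hi'],
      fun i hi hi' => by simp [hH, hmid i hi hi'], fun i hi => by simp [hH, htail i hi]⟩
  · exact Or.inr <| Or.inr ⟨by omega, hd, fun i hi hi' => by simp [hH, hhead i hi hi'],
      fun i hi hi' => by simp [hH, hmid i hi hi'], fun i hi => by simp [hH, htail i hi]⟩
end
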